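/- arXiv:1907.01464 — 6 statements merged into one kernel-verified Lean document; each statement's English description precedes it below -/
import Mathlib

section
/- Let (x(n)) be an increasing sequence of positive real numbers and y(n) = ∑_{i=0}^n x(i). Then lim_{n→∞} y(n+1)/y(n) = γ > 1 holds if and only if lim_{n→∞} y(n)/x(n) = γ/(γ−1). -/
open Filter Topology

/-!
With `y n = ∑_{i ≤ n} x i`, the ratios `a n = y (n+1) / y n` and `b n = y (n+1) / x (n+1)`
satisfy `(a n)⁻¹ + (b n)⁻¹ = (y n + x (n+1)) / y (n+1) = 1`. Hence `b = (1 - a⁻¹)⁻¹`, a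
composition of maps that are homeomorphisms near `γ`, `γ⁻¹` and `1 - γ⁻¹`, so `a → γ` iff
`b → (1 - γ⁻¹)⁻¹ = γ / (γ - 1)`; shifting the index turns `b n` into `y n / x n`.
-/

theorem tendsto_iff_tendsto_div_sub_one_of_inv_add_inv_eq_one {α K : Type*} [Field K]
    [TopologicalSpace K] [IsTopologicalDivisionRing K] {l : Filter α} {a b : α → K}
    (hab : ∀ i, (a i)⁻¹ + (b i)⁻¹ = 1) {c : K} (hc₀ : c ≠ 0) (hc₁ : c ≠ 1) :
    Tendsto a l (𝓝 c) ↔ Tendsto b l (𝓝 (c / (c - 1))) := by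
  have hb : b = fun i => (1 - (a i)⁻¹)⁻¹ := funext fun i => by rw [← hab i]; simp
  have hc : 1 - c⁻¹ = (c - 1) / c := by field_simp
  have hc' : 1 - c⁻¹ ≠ 0 := by rw [hc]; exact div_ne_zero (sub_ne_zero.2 hc₁) hc₀
  rw [hb, ← inv_div, ← hc, tendsto_inv_iff₀ hc', tendsto_const_sub_iff, tendsto_inv_iff₀ hc₀]

theorem inv_div_sum_range_add_inv_div_eq_one {K : Type*} [Field K] (x : ℕ → K) (n : ℕ)
    (h : ∑ i ∈ Finset.range (n + 2), x i ≠ 0) :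
    ((∑ i ∈ Finset.range (n + 2), x i) / ∑ i ∈ Finset.range (n + 1), x i)⁻¹ +
      ((∑ i ∈ Finset.range (n + 2), x i) / x (n + 1))⁻¹ = 1 := by
  rw [inv_div, inv_div, ← add_div, ← Finset.sum_range_succ, div_self h]

theorem carry_stmt1_general (x : ℕ → ℝ) (hpos : ∀ n, 0 < x n)
    (γ : ℝ) (hγ : 1 < γ) :
    Tendsto
        (fun n => (∑ i ∈ Finset.range (n + 2), x i) / (∑ i ∈ Finset.range (n + 1), x i))
        atTop (nhds γ) ↔
      Tendsto (fun n => (∑ i ∈ Finset.range (n + 1), x i) / x n) atTop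
        (nhds (γ / (γ - 1))) := by
  have hsum (n : ℕ) : ∑ i ∈ Finset.range (n + 2), x i ≠ 0 :=
    (Finset.sum_pos (fun i _ => hpos i) (by simp)).ne'
  rw [tendsto_iff_tendsto_div_sub_one_of_inv_add_inv_eq_one
    (fun n => inv_div_sum_range_add_inv_div_eq_one x n (hsum n)) (by positivity) hγ.ne']
  exact tendsto_add_atTop_iff_nat (f := fun n => (∑ i ∈ Finset.range (n + 1), x i) / x n) 1

/-- For an increasing sequence `x` of positive reals with partial sums
`y n = ∑_{i=0}^n x i` and a real `γ > 1`:
`y (n+1) / y n → γ` if and only if `y n / x n → γ / (γ - 1)`. -/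
theorem carry_stmt1 (x : ℕ → ℝ) (hpos : ∀ n, 0 < x n) (hmono : Monotone x)
    (γ : ℝ) (hγ : 1 < γ) :
    Tendsto
        (fun n => (∑ i ∈ Finset.range (n + 2), x i) / (∑ i ∈ Finset.range (n + 1), x i))
        atTop (nhds γ) ↔
      Tendsto (fun n => (∑ i ∈ Finset.range (n + 1), x i) / x n) atTop
        (nhds (γ / (γ - 1))) :=
  carry_stmt1_general x hpos γ hγ
end

section
/- Let L ⊆ A^* be a prefix-closed and right-extendable (PCE) language over a totally ordered finite alphabet. Then for every ℓ ≥ 0, the sum of the carry propagations cp_L(w) over all words w of L of length ℓ equals v_L(ℓ), the number of words of L of length at most ℓ. -/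
open Filter Topology

/-- Length of the longest common prefix of two words. -/
def lcpLen {A : Type*} [DecidableEq A] : List A → List A → ℕ
  | a :: u, b :: v => if a = b then lcpLen u v + 1 else 0
  | _, _ => 0

/-- `Delta u v`: if `|u| = |v|`, the length of `u` minus the length of the longest
common prefix of `u` and `v`; otherwise `max |u| |v|` (padding convention). -/
def Delta {A : Type*} [DecidableEq A] (u v : List A) : ℕ :=
  if u.length = v.length then u.length - lcpLen u v else max u.length v.length

/-- Radix (genealogical) order: shorter words first, words of equal length
compared lexicographically. -/
def RadixLt {A : Type*} [LT A] (u v : List A) : Prop :=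
  u.length < v.length ∨ (u.length = v.length ∧ List.Lex (· < ·) u v)

/-- A language is PCE if it is prefix-closed and right-extendable. -/
def PCE {A : Type*} (L : Set (List A)) : Prop :=
  (∀ w ∈ L, ∀ u, u <+: w → u ∈ L) ∧ (∀ w ∈ L, ∃ v ∈ L, w <+: v ∧ w ≠ v)

/-- `rep` enumerates `L` in radix order: it is a bijection from `ℕ` onto `L`
which is strictly increasing for the radix order, so `rep n` is the `(n+1)`-th
word of `L` (the `L`-representation of `n`). -/
def RadixEnum {A : Type*} [LT A] (L : Set (List A)) (rep : ℕ → List A) : Prop :=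
  Set.BijOn rep Set.univ L ∧ ∀ m n : ℕ, m < n → RadixLt (rep m) (rep n)

/-- Number of words of `L` of length `ℓ`. -/
noncomputable def uCount {A : Type*} (L : Set (List A)) (ℓ : ℕ) : ℕ :=
  {w ∈ L | w.length = ℓ}.ncard

/-- Number of words of `L` of length at most `ℓ`. -/
noncomputable def vCount {A : Type*} (L : Set (List A)) (ℓ : ℕ) : ℕ :=
  {w ∈ L | w.length ≤ ℓ}.ncard

/-- The left bank of a word `v`: words of `L` of length at most `|v|` that are
lexicographically smaller than `v`, excluding the prefixes of `v`. -/
def leftBank {A : Type*} [LT A] (L : Set (List A)) (v : List A) : Set (List A) :=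
  {w ∈ L | w.length ≤ v.length ∧ List.Lex (· < ·) w v} \ {w | w <+: v}

/-! For a word `w ∈ L` of length `ℓ`, consider the words of `L` of length at most `ℓ` that are
lexicographically at most `w`. Since `L` is PCE, every word of `L` of length at most `ℓ` is a
prefix of a word of `L` of length exactly `ℓ`. Hence for the lexicographically least word of
length `ℓ` these are exactly its `ℓ + 1` prefixes, for the greatest one they are all `v_L(ℓ)`
words, and passing from `w` to its successor `w'` of the same length adds exactly the prefixes
of `w'` longer than the common prefix of `w` and `w'`, i.e. `Δ(w, w')` words. The sum
telescopes, and the last word of length `ℓ` has a successor of length `ℓ + 1`, whose carry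
`ℓ + 1` cancels the initial count. -/

theorem Finset.add_sum_eq_add_of_covBy {α M : Type*} [LinearOrder α] [AddCommMonoid M]
    (s : Finset α) (hs : s.Nonempty) (f g : α → M)
    (hstep : ∀ x ∈ s, ∀ y ∈ s, x < y → (∀ z ∈ s, x < z → y ≤ z) → g y = g x + f x) :
    g (s.min' hs) + ∑ x ∈ s, f x = g (s.max' hs) + f (s.max' hs) := by
  classical
  induction s using Finset.induction_on_max with
  | empty => exact absurd hs Finset.not_nonempty_empty
  | insert a s hlt ih =>
    rcases s.eq_empty_or_nonempty with rfl | hs'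
    · simp
    have ha : a ∉ s := fun h => lt_irrefl a (hlt a h)
    have hmax : s.max' hs' < a := hlt _ (s.max'_mem hs')
    have hcov : g a = g (s.max' hs') + f (s.max' hs') := by
      refine hstep _ (mem_insert_of_mem (s.max'_mem hs')) a (mem_insert_self a s) hmax ?_
      rintro z hz hz'
      rcases mem_insert.mp hz with rfl | hz
      · exact le_rfl
      · exact absurd (s.le_max' z hz) (not_le.mpr hz')
    have ih := ih hs' fun x hx y hy hxy hcov =>
      hstep x (mem_insert_of_mem hx) y (mem_insert_of_mem hy) hxy fun z hz hxz => by
        rcases mem_insert.mp hz with rfl | hz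
        · exact (hlt y hy).le
        · exact hcov z hz hxz
    rw [min'_insert a s hs', min_eq_right (s.min'_le _ (s.max'_mem hs') |>.trans hmax.le),
      max'_insert a s hs', max_eq_left hmax.le, sum_insert ha, hcov, add_left_comm, ih, add_comm]

namespace List

variable {α : Type*}

theorem ncard_setOf_isPrefix_length_mem (w : List α) {I : Set ℕ} (hI : I ⊆ Set.Iic w.length) :
    {u | u <+: w ∧ u.length ∈ I}.ncard = I.ncard := by
  have hlen : ∀ m ∈ I, (w.take m).length = m := fun m hm =>
    length_take_of_le (Set.mem_Iic.mp (hI hm))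
  have himage : {u | u <+: w ∧ u.length ∈ I} = (w.take ·) '' I := by
    ext u
    constructor
    · rintro ⟨hu, hI⟩
      exact ⟨u.length, hI, (prefix_iff_eq_take.mp hu).symm⟩
    · rintro ⟨m, hm, rfl⟩
      exact ⟨take_prefix m w, by rwa [hlen m hm]⟩
  rw [himage, Set.InjOn.ncard_image]
  intro m hm n hn hmn
  rw [← hlen m hm, ← hlen n hn]
  exact congrArg length hmn

theorem ncard_setOf_isPrefix (w : List α) : {u | u <+: w}.ncard = w.length + 1 := by
  rw [← Set.ncard_Iic_nat, ← ncard_setOf_isPrefix_length_mem w subset_rfl]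
  congr 1
  ext u
  exact ⟨fun hu => ⟨hu, hu.length_le⟩, And.left⟩

theorem ncard_setOf_isPrefix_lt_length (w : List α) (k : ℕ) :
    {u | u <+: w ∧ k < u.length}.ncard = w.length - k := by
  rw [← Set.ncard_Ioc_nat, ← ncard_setOf_isPrefix_length_mem w Set.Ioc_subset_Iic_self]
  congr 1
  ext u
  exact ⟨fun ⟨hu, hk⟩ => ⟨hu, hk, hu.length_le⟩, fun ⟨hu, hk, _⟩ => ⟨hu, hk⟩⟩

section LinearOrder

variable [LinearOrder α]

theorem IsPrefix.le' {u v : List α} (h : u <+: v) : u ≤ v :=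
  not_lt.mp h.le

theorem IsPrefix.lt_of_lt_of_not_isPrefix :
    ∀ {u u' w : List α}, u <+: u' → u < w → ¬ u <+: w → u' < w
  | [], _, _, _, _, hnp => absurd nil_prefix hnp
  | _ :: _, [], _, hu, _, _ => by simp at hu
  | a :: u, b :: u', w, hu, hlt, hnp => by
    obtain ⟨rfl, htail⟩ := cons_prefix_cons.mp hu
    cases hlt with
    | rel hab => exact Lex.rel hab
    | cons hlt =>
      refine Lex.cons (IsPrefix.lt_of_lt_of_not_isPrefix htail hlt fun h => hnp ?_)
      exact cons_prefix_cons.mpr ⟨rfl, h⟩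

end LinearOrder

end List

section

variable {A : Type*}

section lcpLen

variable [DecidableEq A]

theorem lcpLen_nil_left (v : List A) : lcpLen [] v = 0 := by
  cases v <;> rfl

theorem take_lcpLen : ∀ u v : List A, u.take (lcpLen u v) = v.take (lcpLen u v)
  | [], v => by simp [lcpLen_nil_left]
  | _ :: _, [] => by simp [lcpLen]
  | a :: u, b :: v => by
    by_cases h : a = b
    · subst h
      simp [lcpLen, take_lcpLen u v]
    · simp [lcpLen, h]

theorem List.IsPrefix.isPrefix_of_length_le_lcpLen {u v w : List A} (hu : u <+: v)
    (h : u.length ≤ lcpLen w v) : u <+: w := by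
  have hu' : u <+: v.take (lcpLen w v) := List.prefix_take_iff.mpr ⟨hu, h⟩
  rw [← take_lcpLen] at hu'
  exact (List.prefix_take_iff.mp hu').1

end lcpLen

theorem PCE.exists_isPrefix_length_eq {L : Set (List A)} (hL : PCE L) {u : List A} (hu : u ∈ L)
    {n : ℕ} (hn : u.length ≤ n) : ∃ w ∈ L, u <+: w ∧ w.length = n := by
  induction n, hn using Nat.le_induction with
  | base => exact ⟨u, hu, List.prefix_refl u, rfl⟩
  | succ n _ ih =>
    obtain ⟨w, hw, huw, rfl⟩ := ih
    obtain ⟨v, hv, hwv, hne⟩ := hL.2 w hw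
    have hlt : w.length < v.length :=
      lt_of_le_of_ne hwv.length_le fun h => hne (hwv.eq_of_length h)
    refine ⟨v.take (w.length + 1), hL.1 v hv _ (List.take_prefix _ _), ?_, ?_⟩
    · exact List.prefix_take_iff.mpr ⟨huw.trans hwv, by have := huw.length_le; omega⟩
    · exact List.length_take_of_le hlt

theorem PCE.exists_length_eq {L : Set (List A)} (hL : PCE L) (hne : L.Nonempty) (n : ℕ) :
    ∃ w ∈ L, w.length = n := by
  obtain ⟨u, hu⟩ := hne
  obtain ⟨w, hw, -, hwn⟩ := hL.exists_isPrefix_length_eq (hL.1 u hu [] List.nil_prefix) n.zero_le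
  exact ⟨w, hw, hwn⟩

def IsRadixSucc [LT A] (L : Set (List A)) (w s : List A) : Prop :=
  s ∈ L ∧ RadixLt w s ∧ ∀ v ∈ L, RadixLt w v → s = v ∨ RadixLt s v

section LinearOrder

variable [LinearOrder A]

theorem lt_take_of_lcpLen_lt :
    ∀ {w v : List A} {m : ℕ}, w < v → w.length = v.length → lcpLen w v < m → w < v.take m
  | [], [], _, h, _, _ => absurd h (lt_irrefl _)
  | _ :: _, [], _, h, _, _ => by cases h
  | [], _ :: _, _, _, hlen, _ => by simp at hlen
  | a :: w, b :: v, m + 1, h, hlen, hm => by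
    rw [List.take_succ_cons]
    cases h with
    | rel hab => exact List.Lex.rel hab
    | cons h =>
      rw [lcpLen, if_pos rfl] at hm
      exact List.Lex.cons (lt_take_of_lcpLen_lt h (by simpa using hlen) (by omega))

variable {L : Set (List A)} {ℓ : ℕ} {w w' s : List A}

theorem IsRadixSucc.eq_of_covBy (h : IsRadixSucc L w s) (hw' : w' ∈ L)
    (hlen : w'.length = w.length) (hlt : w < w')
    (hcov : ∀ v ∈ L, v.length = w.length → w < v → w' ≤ v) : s = w' := by
  obtain ⟨hs, hws, hleast⟩ := h
  refine (hleast w' hw' (Or.inr ⟨hlen.symm, hlt⟩)).resolve_right ?_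
  rcases hws with hws | ⟨hws, hws_lt⟩
  · rintro (h | ⟨h, -⟩) <;> omega
  · rintro (h | ⟨-, hsw'⟩)
    · omega
    · exact (hcov s hs hws.symm hws_lt).not_gt hsw'

theorem IsRadixSucc.length_eq_of_forall_le (h : IsRadixSucc L w s)
    (hmax : ∀ v ∈ L, v.length = w.length → v ≤ w) {v : List A} (hv : v ∈ L)
    (hvlen : v.length = w.length + 1) : s.length = w.length + 1 := by
  obtain ⟨hs, hws, hleast⟩ := h
  have hgt : w.length < s.length := by
    rcases hws with hws | ⟨hws, hws_lt⟩
    · exact hws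
    · exact absurd (hmax s hs hws.symm) (not_le.mpr hws_lt)
  rcases hleast v hv (Or.inl (by omega)) with rfl | hsv | ⟨hsv, -⟩ <;> omega

def lexLowerSet (L : Set (List A)) (ℓ : ℕ) (w : List A) : Set (List A) :=
  {u ∈ L | u.length ≤ ℓ ∧ u ≤ w}

theorem lexLowerSet_eq_setOf_isPrefix (hL : PCE L) (hw : w ∈ L) (hwℓ : w.length = ℓ)
    (hmin : ∀ v ∈ L, v.length = ℓ → w ≤ v) : lexLowerSet L ℓ w = {u | u <+: w} := by
  ext u
  constructor
  · rintro ⟨hu, huℓ, huw⟩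
    by_contra hnp
    obtain ⟨v, hv, huv, hvℓ⟩ := hL.exists_isPrefix_length_eq hu huℓ
    have huw : u < w := huw.lt_of_ne fun h => hnp (h ▸ List.prefix_refl u)
    exact (hmin v hv hvℓ).not_gt (huv.lt_of_lt_of_not_isPrefix huw hnp)
  · intro hu
    exact ⟨hL.1 w hw u hu, hwℓ ▸ hu.length_le, hu.le'⟩

theorem lexLowerSet_eq_of_forall_le (hL : PCE L) (hmax : ∀ v ∈ L, v.length = ℓ → v ≤ w) :
    lexLowerSet L ℓ w = {u ∈ L | u.length ≤ ℓ} := by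
  refine Set.Subset.antisymm (fun u hu => ⟨hu.1, hu.2.1⟩) fun u ⟨hu, huℓ⟩ => ⟨hu, huℓ, ?_⟩
  obtain ⟨v, hv, huv, hvℓ⟩ := hL.exists_isPrefix_length_eq hu huℓ
  exact huv.le'.trans (hmax v hv hvℓ)

theorem lexLowerSet_sdiff_eq_of_covBy (hL : PCE L) (hw' : w' ∈ L) (hwℓ : w.length = ℓ)
    (hw'ℓ : w'.length = ℓ) (hlt : w < w') (hcov : ∀ v ∈ L, v.length = ℓ → w < v → w' ≤ v) :
    lexLowerSet L ℓ w' \ lexLowerSet L ℓ w = {u | u <+: w' ∧ lcpLen w w' < u.length} := by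
  ext u
  constructor
  · rintro ⟨⟨hu, huℓ, huw'⟩, hnot⟩
    have hwu : w < u := not_le.mp fun h => hnot ⟨hu, huℓ, h⟩
    have hpre : u <+: w' := by
      by_contra hnp
      obtain ⟨v, hv, huv, hvℓ⟩ := hL.exists_isPrefix_length_eq hu huℓ
      have huw' : u < w' := huw'.lt_of_ne fun h => hnp (h ▸ List.prefix_refl u)
      exact (hcov v hv hvℓ (hwu.trans_le huv.le')).not_gt
        (huv.lt_of_lt_of_not_isPrefix huw' hnp)
    refine ⟨hpre, not_le.mp fun h => hwu.not_ge ?_⟩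
    exact (hpre.isPrefix_of_length_le_lcpLen h).le'
  · rintro ⟨hpre, hlcp⟩
    have hwu : w < u := by
      rw [List.prefix_iff_eq_take.mp hpre]
      exact lt_take_of_lcpLen_lt hlt (hwℓ.trans hw'ℓ.symm) hlcp
    exact ⟨⟨hL.1 w' hw' u hpre, hw'ℓ ▸ hpre.length_le, hpre.le'⟩,
      fun ⟨_, _, huw⟩ => hwu.not_ge huw⟩

theorem ncard_lexLowerSet_of_covBy [Finite A] (hL : PCE L) (hw' : w' ∈ L)
    (hwℓ : w.length = ℓ) (hw'ℓ : w'.length = ℓ) (hlt : w < w')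
    (hcov : ∀ v ∈ L, v.length = ℓ → w < v → w' ≤ v) :
    (lexLowerSet L ℓ w').ncard = (lexLowerSet L ℓ w).ncard + Delta w w' := by
  have hsub : lexLowerSet L ℓ w ⊆ lexLowerSet L ℓ w' :=
    fun u ⟨hu, huℓ, huw⟩ => ⟨hu, huℓ, huw.trans hlt.le⟩
  have hfin : (lexLowerSet L ℓ w').Finite :=
    (List.finite_length_le A ℓ).subset fun u hu => hu.2.1
  rw [← Set.ncard_sdiff_add_ncard_of_subset hsub hfin,
    lexLowerSet_sdiff_eq_of_covBy hL hw' hwℓ hw'ℓ hlt hcov, List.ncard_setOf_isPrefix_lt_length,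
    Delta, if_pos (hwℓ.trans hw'ℓ.symm), hw'ℓ, hwℓ, add_comm]

end LinearOrder

end

/-- For a PCE language `L` (with radix-order successor function `succ` on `L`),
for every `ℓ` the sum of the carry propagations `Δ(w, succ w)` over all words
`w ∈ L` of length `ℓ` equals the number of words of `L` of length at most `ℓ`. -/
theorem carry_stmt6 {A : Type*} [Fintype A] [LinearOrder A]
    (L : Set (List A)) (hL : PCE L)
    (succ : List A → List A)
    (hsucc : ∀ w ∈ L, succ w ∈ L ∧ RadixLt w (succ w) ∧
      ∀ v ∈ L, RadixLt w v → succ w = v ∨ RadixLt (succ w) v)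
    (ℓ : ℕ) :
    ∑ᶠ w ∈ {w ∈ L | w.length = ℓ}, Delta w (succ w) = vCount L ℓ := by
  replace hsucc : ∀ w ∈ L, IsRadixSucc L w (succ w) := hsucc
  rcases L.eq_empty_or_nonempty with rfl | hne
  · simp [vCount]
  have hfin : {w ∈ L | w.length = ℓ}.Finite :=
    (List.finite_length_eq A ℓ).subset fun w hw => hw.2
  rw [finsum_mem_eq_finite_toFinset_sum _ hfin, vCount]
  set S := hfin.toFinset
  have hmem {w : List A} : w ∈ S ↔ w ∈ L ∧ w.length = ℓ := hfin.mem_toFinset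
  have hS : S.Nonempty := by
    obtain ⟨w, hw, hwℓ⟩ := hL.exists_length_eq hne ℓ
    exact ⟨w, hmem.mpr ⟨hw, hwℓ⟩⟩
  have htelescope := S.add_sum_eq_add_of_covBy hS (fun w => Delta w (succ w))
      (fun w => (lexLowerSet L ℓ w).ncard) fun x hx y hy hxy hcov => by
    obtain ⟨hx, hxℓ⟩ := hmem.mp hx
    obtain ⟨hy, hyℓ⟩ := hmem.mp hy
    have hcov' : ∀ v ∈ L, v.length = ℓ → x < v → y ≤ v :=
      fun v hv hvℓ => hcov v (hmem.mpr ⟨hv, hvℓ⟩)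
    rw [(hsucc x hx).eq_of_covBy hy (hyℓ.trans hxℓ.symm) hxy (hxℓ ▸ hcov')]
    exact ncard_lexLowerSet_of_covBy hL hy hxℓ hyℓ hxy hcov'
  obtain ⟨hmin, hminℓ⟩ := hmem.mp (S.min'_mem hS)
  obtain ⟨hmax, hmaxℓ⟩ := hmem.mp (S.max'_mem hS)
  have hmin_le : ∀ v ∈ L, v.length = ℓ → S.min' hS ≤ v :=
    fun v hv hvℓ => S.min'_le v (hmem.mpr ⟨hv, hvℓ⟩)
  have hle_max : ∀ v ∈ L, v.length = ℓ → v ≤ S.max' hS :=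
    fun v hv hvℓ => S.le_max' v (hmem.mpr ⟨hv, hvℓ⟩)
  obtain ⟨v, hv, hvℓ⟩ := hL.exists_length_eq hne (ℓ + 1)
  have hsuccℓ := (hsucc _ hmax).length_eq_of_forall_le (hmaxℓ ▸ hle_max) hv (hmaxℓ ▸ hvℓ)
  rw [lexLowerSet_eq_setOf_isPrefix hL hmin hminℓ hmin_le, lexLowerSet_eq_of_forall_le hL hle_max,
    List.ncard_setOf_isPrefix, Delta, if_neg (by omega), hsuccℓ, hminℓ, hmaxℓ] at htelescope
  omega
end

section
/- Let L be a PCE language, u ∈ L of length ℓ with N = val_L(u) (i.e., u is the (N+1)-th word of L in radix order), and suppose u is not the maximal word of L of length ℓ. Then ∑_{i=v_L(ℓ−1)}^{N} cp_L(i) equals the cardinality of the left bank of Succ(u), i.e., the number of words w ∈ L with |w| ≤ ℓ, w lexicographically smaller than the prefix of Succ(u) of length |w|, and w not a prefix of Succ(u). -/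
/-!
Let `ℓ = |u|` and `M = v_L(ℓ - 1)`, the rank of the first word of length `ℓ`. Its left bank is
empty: a word of `L` to its left extends, inside `L`, to a word of length `ℓ` that precedes it.
If `x, y` are consecutive words of `L` of length `ℓ`, the left bank of `y` is that of `x` together
with the prefixes of `x` that are not prefixes of `y`; otherwise extending a word of the left bank
of `y` to length `ℓ` would produce a word of `L` strictly between `x` and `y`. There are
`|x| - lcp(x, y) = Delta x y` such prefixes, so the sum telescopes from `M` to `N`. Since `u` is
not maximal, `Succ u = rep (N + 1)` still has length `ℓ`.
-/

open Filter Topology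

namespace List

theorem Lex.of_prefix_of_prefix {α : Type*} {r : α → α → Prop} {w v w' v' : List α}
    (h : Lex r w v) (hw : ¬ w <+: v) (hw' : w <+: w') (hv' : v <+: v') : Lex r w' v' := by
  obtain ⟨s, rfl⟩ := hw'
  obtain ⟨t, rfl⟩ := hv'
  induction h with
  | nil => exact absurd nil_prefix hw
  | rel hab => exact Lex.rel hab
  | cons _ ih => exact Lex.cons (ih fun hp => hw (cons_prefix_cons.2 ⟨rfl, hp⟩))

theorem IsPrefix.lex_of_ne {α : Type*} {r : α → α → Prop} {w v : List α}
    (h : w <+: v) (hne : w ≠ v) : Lex r w v := by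
  obtain ⟨_ | ⟨a, t⟩, rfl⟩ := h
  · simp at hne
  · simpa using Lex.append_left r (Lex.nil (a := a) (l := t)) w

theorem take_prefix_iff_le_lcpLen {α : Type*} [DecidableEq α] :
    ∀ {u v : List α} {k : ℕ}, k ≤ u.length → (u.take k <+: v ↔ k ≤ lcpLen u v)
  | [], v, k, hk => by simp_all
  | _ :: _, _, 0, _ => by simp
  | _ :: _, [], _ + 1, _ => by simp [lcpLen]
  | a :: t, b :: s, k + 1, hk => by
    by_cases hab : a = b
    · simp [lcpLen, hab, take_prefix_iff_le_lcpLen (Nat.le_of_succ_le_succ hk)]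
    · simp [lcpLen, hab]

theorem ncard_prefixes_diff {α : Type*} [DecidableEq α] (u v : List α) :
    ({w | w <+: u} \ {w | w <+: v} : Set (List α)).ncard = u.length - lcpLen u v := by
  have hset : ({w | w <+: u} \ {w | w <+: v} : Set (List α))
      = (u.take ·) '' Set.Ioc (lcpLen u v) u.length := by
    ext w
    simp only [Set.mem_sdiff, Set.mem_ofPred_eq, Set.mem_image, Set.mem_Ioc]
    constructor
    · rintro ⟨hwu, hwv⟩
      have hw : u.take w.length = w := (prefix_iff_eq_take.1 hwu).symm
      rw [← hw, take_prefix_iff_le_lcpLen hwu.length_le] at hwv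
      exact ⟨w.length, ⟨not_le.1 hwv, hwu.length_le⟩, hw⟩
    · rintro ⟨k, ⟨hlt, hk⟩, rfl⟩
      exact ⟨take_prefix _ _, by rw [take_prefix_iff_le_lcpLen hk]; omega⟩
  have hinj : Set.InjOn (u.take ·) (Set.Ioc (lcpLen u v) u.length) := by
    intro k hk k' hk' h
    have := congrArg length h
    simp only [length_take, Set.mem_Ioc] at this hk hk'
    omega
  rw [hset, hinj.ncard_image, Set.ncard_eq_toFinset_card', Set.toFinset_Ioc, Nat.card_Ioc]

end List

theorem PCE.exists_prefix_length_eq {A : Type*} {L : Set (List A)} (hL : PCE L)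
    {w : List A} (hw : w ∈ L) {k : ℕ} (hk : w.length ≤ k) :
    ∃ w' ∈ L, w <+: w' ∧ w'.length = k := by
  have long : ∀ n : ℕ, ∃ w' ∈ L, w <+: w' ∧ n ≤ w'.length := by
    intro n
    induction n with
    | zero => exact ⟨w, hw, List.prefix_refl w, Nat.zero_le _⟩
    | succ n ih =>
      obtain ⟨w', hw', hpre, hlen⟩ := ih
      obtain ⟨w'', hw'', hpre', hne⟩ := hL.2 w' hw'
      have hlt : w'.length < w''.length :=
        lt_of_le_of_ne hpre'.length_le fun he => hne (hpre'.eq_of_length he)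
      exact ⟨w'', hw'', hpre.trans hpre', by omega⟩
  obtain ⟨w', hw', hpre, hlen⟩ := long k
  exact ⟨w'.take k, hL.1 w' hw' _ (List.take_prefix _ _),
    List.prefix_take_iff.2 ⟨hpre, hk⟩, by rw [List.length_take]; omega⟩

section LeftBank

variable {A : Type*} [LinearOrder A] {L : Set (List A)}

theorem leftBank_eq_empty (hL : PCE L) {x : List A}
    (hx : ∀ w ∈ L, w.length = x.length → ¬ List.Lex (· < ·) w x) :
    leftBank L x = ∅ := by
  refine Set.eq_empty_of_forall_notMem ?_
  rintro w ⟨⟨hwL, hwlen, hwx⟩, hwp⟩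
  obtain ⟨w', hw'L, hww', hlen⟩ := hL.exists_prefix_length_eq hwL hwlen
  exact hx w' hw'L hlen (hwx.of_prefix_of_prefix hwp hww' List.prefix_rfl)

theorem leftBank_eq_union_of_consecutive (hL : PCE L) {x y : List A} (hxL : x ∈ L)
    (hlen : x.length = y.length) (hxy : List.Lex (· < ·) x y)
    (hgap : ∀ w ∈ L, w.length = x.length → List.Lex (· < ·) x w → ¬ List.Lex (· < ·) w y) :
    leftBank L y = leftBank L x ∪ ({w | w <+: x} \ {w | w <+: y}) := by
  ext w
  simp only [leftBank, Set.mem_union, Set.mem_sdiff, Set.mem_ofPred_eq]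
  constructor
  · rintro ⟨⟨hwL, hwlen, hwy⟩, hwny⟩
    by_cases hwx : w <+: x
    · exact Or.inr ⟨hwx, hwny⟩
    refine Or.inl ⟨⟨hwL, hlen ▸ hwlen, ?_⟩, hwx⟩
    rcases trichotomous_of (List.Lex ((· < ·) : A → A → Prop)) w x with h | rfl | h
    · exact h
    · exact absurd List.prefix_rfl hwx
    · obtain ⟨w', hw'L, hww', hlen'⟩ := hL.exists_prefix_length_eq hwL (hlen ▸ hwlen)
      have hxw : ¬ x <+: w := fun hp =>
        hwx (hp.eq_of_length (by have := hp.length_le; omega) ▸ List.prefix_rfl)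
      exact (hgap w' hw'L hlen' (h.of_prefix_of_prefix hxw List.prefix_rfl hww')
        (hwy.of_prefix_of_prefix hwny hww' List.prefix_rfl)).elim
  · rintro (⟨⟨hwL, hwlen, hwx⟩, hwnx⟩ | ⟨hwx, hwny⟩)
    · refine ⟨⟨hwL, hlen ▸ hwlen, List.lex_trans (fun h1 h2 => lt_trans h1 h2) hwx hxy⟩, ?_⟩
      exact fun hwy => asymm hxy (hwx.of_prefix_of_prefix hwnx hwy List.prefix_rfl)
    · refine ⟨⟨hL.1 x hxL w hwx, hlen ▸ hwx.length_le, ?_⟩, hwny⟩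
      rcases eq_or_ne w x with rfl | hne
      · exact hxy
      · exact List.lex_trans (fun h1 h2 => lt_trans h1 h2) (hwx.lex_of_ne hne) hxy

theorem ncard_leftBank_of_consecutive [Finite A] (hL : PCE L) {x y : List A} (hxL : x ∈ L)
    (hlen : x.length = y.length) (hxy : List.Lex (· < ·) x y)
    (hgap : ∀ w ∈ L, w.length = x.length → List.Lex (· < ·) x w → ¬ List.Lex (· < ·) w y) :
    (leftBank L y).ncard = (leftBank L x).ncard + Delta x y := by
  have hdisj : Disjoint (leftBank L x) ({w | w <+: x} \ {w | w <+: y}) :=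
    Set.disjoint_left.2 fun _ hw hw' => hw.2 hw'.1
  have hfin : (leftBank L x).Finite :=
    (List.finite_length_le A x.length).subset fun _ hw => hw.1.2.1
  have hfin' : ({w | w <+: x} \ {w | w <+: y}).Finite :=
    (List.finite_length_le A x.length).subset fun _ hw => hw.1.length_le
  rw [leftBank_eq_union_of_consecutive hL hxL hlen hxy hgap,
    Set.ncard_union_eq hdisj hfin hfin', List.ncard_prefixes_diff, Delta, if_pos hlen]

end LeftBank

section Radix

variable {A : Type*} [LinearOrder A]

theorem RadixLt.length_le {u v : List A} (h : RadixLt u v) : u.length ≤ v.length := by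
  rcases h with h | ⟨h, -⟩ <;> omega

theorem RadixLt.not_radixLt {u v : List A} (h : RadixLt u v) : ¬ RadixLt v u := by
  rcases h with h | ⟨e, h⟩ <;> rintro (h' | ⟨e', h'⟩)
  all_goals first | omega | exact asymm h h'

namespace RadixEnum

variable {L : Set (List A)} {rep : ℕ → List A}

theorem mem (hrep : RadixEnum L rep) (n : ℕ) : rep n ∈ L :=
  hrep.1.mapsTo (Set.mem_univ n)

theorem exists_eq (hrep : RadixEnum L rep) {w : List A} (hw : w ∈ L) : ∃ n, rep n = w := by
  obtain ⟨n, -, hn⟩ := hrep.1.surjOn hw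
  exact ⟨n, hn⟩

theorem lt_of_radixLt (hrep : RadixEnum L rep) {m n : ℕ} (h : RadixLt (rep m) (rep n)) :
    m < n := by
  by_contra! hnm
  rcases hnm.lt_or_eq with hnm | rfl
  · exact (hrep.2 n m hnm).not_radixLt h
  · exact RadixLt.not_radixLt h h

theorem length_mono (hrep : RadixEnum L rep) : Monotone fun n => (rep n).length :=
  monotone_nat_of_le_succ fun n => (hrep.2 n (n + 1) n.lt_succ_self).length_le

theorem length_lt_iff_lt_ncard [Finite A] (hrep : RadixEnum L rep) (ℓ i : ℕ) :
    (rep i).length < ℓ ↔ i < {w ∈ L | w.length < ℓ}.ncard := by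
  set I := {i : ℕ | (rep i).length < ℓ}
  have hinj : Function.Injective rep := Set.injOn_univ.1 hrep.1.injOn
  have himage : rep '' I = {w ∈ L | w.length < ℓ} := by
    ext w
    constructor
    · rintro ⟨j, hj, rfl⟩
      exact ⟨hrep.mem j, hj⟩
    · rintro ⟨hwL, hwlen⟩
      obtain ⟨j, rfl⟩ := hrep.exists_eq hwL
      exact ⟨j, hwlen, rfl⟩
  have hfin : I.Finite := Set.Finite.of_finite_image
    (himage ▸ (List.finite_length_lt A ℓ).subset fun _ hw => hw.2) hinj.injOn
  have hlower : IsLowerSet I := fun _ _ hji hi => lt_of_le_of_lt (hrep.length_mono hji) hi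
  obtain hI | ⟨a, hI⟩ := hlower.eq_univ_or_Iio
  · exact absurd (hI ▸ hfin) Set.infinite_univ
  · rw [← himage, hinj.injOn.ncard_image, hI, Set.ncard_Iio_nat]
    exact Set.ext_iff.1 hI i

theorem not_lex_between (hrep : RadixEnum L rep) (i : ℕ) :
    ∀ w ∈ L, w.length = (rep i).length →
      List.Lex (· < ·) (rep i) w → ¬ List.Lex (· < ·) w (rep (i + 1)) := by
  intro w hw hlen h₁ h₂
  obtain ⟨m, rfl⟩ := hrep.exists_eq hw
  have him : i < m := hrep.lt_of_radixLt (Or.inr ⟨hlen.symm, h₁⟩)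
  have hlen' : (rep m).length = (rep (i + 1)).length :=
    le_antisymm (hlen ▸ hrep.length_mono i.le_succ) (hrep.length_mono him)
  have := hrep.lt_of_radixLt (Or.inr ⟨hlen', h₂⟩)
  omega

theorem leftBank_eq_empty_of_forall_lt (hL : PCE L) (hrep : RadixEnum L rep) {n : ℕ}
    (hn : ∀ m < n, (rep m).length < (rep n).length) : leftBank L (rep n) = ∅ := by
  refine leftBank_eq_empty hL fun w hw hlen hlex => ?_
  obtain ⟨m, rfl⟩ := hrep.exists_eq hw
  exact hlen.not_lt (hn m (hrep.lt_of_radixLt (Or.inr ⟨hlen, hlex⟩)))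

theorem sum_Delta_eq_ncard_leftBank [Finite A] (hL : PCE L) (hrep : RadixEnum L rep)
    {M n : ℕ} (hMn : M ≤ n) (hM : ∀ m < M, (rep m).length < (rep M).length)
    (hn : (rep n).length = (rep M).length) :
    ∑ i ∈ Finset.Ico M n, Delta (rep i) (rep (i + 1)) = (leftBank L (rep n)).ncard := by
  induction n, hMn using Nat.le_induction with
  | base => rw [Finset.Ico_self, Finset.sum_empty, leftBank_eq_empty_of_forall_lt hL hrep hM,
      Set.ncard_empty]
  | succ n hMn ih =>
    have hlen : (rep n).length = (rep M).length :=
      le_antisymm (hn ▸ hrep.length_mono n.le_succ) (hrep.length_mono hMn)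
    have hlex : List.Lex (· < ·) (rep n) (rep (n + 1)) := by
      rcases hrep.2 n (n + 1) n.lt_succ_self with h | ⟨-, h⟩
      · omega
      · exact h
    rw [Finset.sum_Ico_succ_top hMn, ih hlen, ncard_leftBank_of_consecutive hL (hrep.mem n)
      (hlen.trans hn.symm) hlex (hrep.not_lex_between n)]

end RadixEnum

end Radix

theorem carry_stmt7_general {A : Type*} [Fintype A] [LinearOrder A]
    (L : Set (List A)) (hL : PCE L)
    (rep : ℕ → List A) (hrep : RadixEnum L rep)
    (u : List A) (N : ℕ) (hN : rep N = u)
    (hnotmax : ∃ w ∈ L, w.length = u.length ∧ List.Lex (· < ·) u w) :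
    ∑ i ∈ Finset.Icc ({w ∈ L | w.length < u.length}.ncard) N,
        Delta (rep i) (rep (i + 1)) =
      (leftBank L (rep (N + 1))).ncard := by
  subst hN
  have hshort := hrep.length_lt_iff_lt_ncard (rep N).length
  set M := {w ∈ L | w.length < (rep N).length}.ncard
  have hMN : M ≤ N := not_lt.1 ((hshort N).not.1 (lt_irrefl _))
  have hM : (rep M).length = (rep N).length :=
    le_antisymm (hrep.length_mono hMN) (not_lt.1 ((hshort M).not.2 (lt_irrefl _)))
  have hsucc : (rep (N + 1)).length = (rep N).length := by
    obtain ⟨w, hwL, hwlen, hlex⟩ := hnotmax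
    obtain ⟨m, rfl⟩ := hrep.exists_eq hwL
    have hNm : N < m := hrep.lt_of_radixLt (Or.inr ⟨hwlen.symm, hlex⟩)
    exact le_antisymm (hwlen ▸ hrep.length_mono hNm) (hrep.length_mono N.le_succ)
  rw [← Finset.Ico_add_one_right_eq_Icc]
  exact hrep.sum_Delta_eq_ncard_leftBank hL (by omega) (fun m hm => hM ▸ (hshort m).2 hm)
    (hsucc.trans hM.symm)

/-- Theorem (lb-car-pro), non-maximal case: if `u ∈ L` is the `(N+1)`-th word of
the PCE language `L` in radix order, `ℓ = |u|`, and `u` is not the maximal word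
of `L` of length `ℓ`, then the sum of the carry propagations at the words of
ranks `v_L(ℓ-1), …, N` equals the cardinality of the left bank of `Succ u`. -/
theorem carry_stmt7 {A : Type*} [Fintype A] [LinearOrder A]
    (L : Set (List A)) (hL : PCE L)
    (rep : ℕ → List A) (hrep : RadixEnum L rep)
    (u : List A) (hu : u ∈ L) (N : ℕ) (hN : rep N = u)
    (hnotmax : ∃ w ∈ L, w.length = u.length ∧ List.Lex (· < ·) u w) :
    ∑ i ∈ Finset.Icc ({w ∈ L | w.length < u.length}.ncard) N,
        Delta (rep i) (rep (i + 1)) =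
      (leftBank L (rep (N + 1))).ncard :=
  carry_stmt7_general L hL rep hrep u N hN hnotmax
end

section
/- Let L be a PCE language with exponential growth. The length-filtered carry propagation FCP(L) = lim_{ℓ→∞} (1/v_L(ℓ)) ∑_{i=0}^{ℓ} v_L(i) exists if and only if the local growth rate γ_L = lim_{ℓ→∞} u_L(ℓ+1)/u_L(ℓ) exists, and in that case FCP(L) = γ_L/(γ_L − 1). -/
/-!
For a positive sequence `a` with partial sums `S`, the quotients `w n = S n / a n` satisfy the
affine recursion `w (n + 1) = 1 + (a n / a (n + 1)) * w n`. If `a (n + 1) / a n → γ > 1` this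
recursion is eventually a contraction, so `w n → 1 / (1 - γ⁻¹) = γ / (γ - 1)`, and then `S` has
the same ratio limit `γ` as `a`; conversely the recursion can be solved for `a n / a (n + 1)`.
Applied to `u_L` and its partial sums `v_L`, this gives both directions. Exponential growth makes
`γ > 1`, since a ratio limit is also the limit of `u_L(ℓ) ^ (1 / ℓ)` (Cesàro means of the
logarithms), and for the converse `FCP(L) > 1` because `v_L(ℓ + 1) ≤ (1 + |A|) v_L(ℓ)`.
-/

open Filter Topology

open Finset

section Ratios

lemma tendsto_zero_of_le_mul_add {e δ : ℕ → ℝ} {q : ℝ} (hq0 : 0 ≤ q) (hq1 : q < 1)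
    (he : ∀ n, 0 ≤ e n) (hrec : ∀ᶠ n in atTop, e (n + 1) ≤ q * e n + δ n)
    (hδ : Tendsto δ atTop (𝓝 0)) : Tendsto e atTop (𝓝 0) := by
  refine tendsto_order.2 ⟨fun b hb => .of_forall fun n => hb.trans_le (he n), fun ε hε => ?_⟩
  obtain ⟨N, hN⟩ := eventually_atTop.1 <|
    hrec.and (hδ.eventually_lt_const (by positivity : 0 < (1 - q) * (ε / 2)))
  -- `e - ε / 2` contracts by the factor `q` from `N` on.
  have hgeom : ∀ k, e (N + k) - ε / 2 ≤ q ^ k * (e N - ε / 2) := by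
    intro k
    induction k with
    | zero => simp
    | succ k ih =>
      obtain ⟨hstep, hsmall⟩ := hN (N + k) (Nat.le_add_right N k)
      calc e (N + (k + 1)) - ε / 2 ≤ q * (e (N + k) - ε / 2) := by
            rw [← add_assoc]; linarith
        _ ≤ q * (q ^ k * (e N - ε / 2)) := mul_le_mul_of_nonneg_left ih hq0
        _ = q ^ (k + 1) * (e N - ε / 2) := by ring
  obtain ⟨K, hK⟩ := eventually_atTop.1 <|
    ((tendsto_pow_atTop_nhds_zero_of_lt_one hq0 hq1).mul_const (e N - ε / 2)).eventually_lt_const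
      (by rw [zero_mul]; positivity : (0 : ℝ) * (e N - ε / 2) < ε / 2)
  filter_upwards [eventually_ge_atTop (N + K)] with n hn
  obtain ⟨k, rfl⟩ := Nat.exists_eq_add_of_le (le_of_add_le_left hn)
  linarith [hgeom k, hK k (by omega)]

lemma tendsto_of_affine_recurrence {x b q : ℕ → ℝ} {b₀ q₀ : ℝ} (hq₀ : |q₀| < 1)
    (hx : ∀ n, x (n + 1) = b n + q n * x n) (hb : Tendsto b atTop (𝓝 b₀))
    (hq : Tendsto q atTop (𝓝 q₀)) : Tendsto x atTop (𝓝 (b₀ / (1 - q₀))) := by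
  set c := b₀ / (1 - q₀)
  have hc : b₀ + q₀ * c = c := by
    have : (1 - q₀) * c = b₀ := mul_div_cancel₀ _ (by linarith [le_abs_self q₀])
    linarith
  have hstep : ∀ n, |x (n + 1) - c| ≤ |q n| * |x n - c| + (|b n - b₀| + |q n - q₀| * |c|) := by
    intro n
    calc |x (n + 1) - c| = |q n * (x n - c) + ((b n - b₀) + (q n - q₀) * c)| := by
          rw [hx]; congr 1; linear_combination hc
      _ ≤ |q n| * |x n - c| + (|b n - b₀| + |q n - q₀| * |c|) := by
          refine (abs_add_le _ _).trans ?_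
          rw [abs_mul]
          gcongr
          exact (abs_add_le _ _).trans_eq (by rw [abs_mul])
  have hδ : Tendsto (fun n => |b n - b₀| + |q n - q₀| * |c|) atTop (𝓝 0) := by
    have hb' := (tendsto_sub_nhds_zero_iff.2 hb).abs
    have hq' := ((tendsto_sub_nhds_zero_iff.2 hq).abs).mul_const |c|
    simpa using hb'.add hq'
  have hρ : ∀ᶠ n in atTop, |q n| ≤ (|q₀| + 1) / 2 :=
    (hq.abs.eventually_lt_const (by linarith)).mono fun _ h => h.le
  have he := tendsto_zero_of_le_mul_add (e := fun n => |x n - c|) (q := (|q₀| + 1) / 2)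
    (by positivity) (by linarith) (fun n => abs_nonneg _)
    (hρ.mono fun n h => (hstep n).trans (by gcongr)) hδ
  exact tendsto_iff_norm_sub_tendsto_zero.2 he

variable {a : ℕ → ℝ}

lemma partialSum_div_succ (ha : ∀ n, 0 < a n) (n : ℕ) :
    (∑ i ∈ range (n + 1 + 1), a i) / a (n + 1)
      = 1 + (a (n + 1) / a n)⁻¹ * ((∑ i ∈ range (n + 1), a i) / a n) := by
  have h0 := (ha n).ne'
  have h1 := (ha (n + 1)).ne'
  rw [sum_range_succ _ (n + 1)]
  field_simp
  ring

lemma tendsto_partialSum_div_of_tendsto_ratio (ha : ∀ n, 0 < a n) {γ : ℝ} (hγ : 1 < γ)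
    (h : Tendsto (fun n => a (n + 1) / a n) atTop (𝓝 γ)) :
    Tendsto (fun n => (∑ i ∈ range (n + 1), a i) / a n) atTop (𝓝 (γ / (γ - 1))) := by
  have hγ' : |γ⁻¹| < 1 := by
    rw [abs_of_pos (by positivity)]; exact inv_lt_one_of_one_lt₀ hγ
  convert tendsto_of_affine_recurrence (x := fun n => (∑ i ∈ range (n + 1), a i) / a n) hγ'
    (partialSum_div_succ ha) tendsto_const_nhds
    (h.inv₀ (by positivity)) using 2
  field_simp

lemma one_lt_of_tendsto_partialSum_div (ha : ∀ n, 0 < a n) {K F : ℝ}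
    (hK : ∀ n, a (n + 1) ≤ K * a n)
    (h : Tendsto (fun n => (∑ i ∈ range (n + 1), a i) / a n) atTop (𝓝 F)) : 1 < F := by
  have hK0 : 0 < K := pos_of_mul_pos_left ((ha 1).trans_le (hK 0)) (ha 0).le
  have hge : ∀ n, 1 ≤ (∑ i ∈ range (n + 1), a i) / a n := fun n =>
    (one_le_div (ha n)).2 <| single_le_sum (fun i _ => (ha i).le) (self_mem_range_succ n)
  refine lt_of_lt_of_le (lt_add_of_pos_right 1 (inv_pos.2 hK0)) <|
    ge_of_tendsto' ((tendsto_add_atTop_iff_nat 1).2 h) fun n => ?_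
  rw [partialSum_div_succ ha]
  gcongr
  calc K⁻¹ ≤ (a (n + 1) / a n)⁻¹ := by
        gcongr
        · exact div_pos (ha _) (ha _)
        · exact (div_le_iff₀ (ha n)).2 (hK n)
    _ ≤ (a (n + 1) / a n)⁻¹ * ((∑ i ∈ range (n + 1), a i) / a n) :=
        le_mul_of_one_le_right (inv_nonneg.2 (div_pos (ha _) (ha _)).le) (hge n)

lemma tendsto_ratio_of_tendsto_partialSum_div (ha : ∀ n, 0 < a n) {F : ℝ} (hF : 1 < F)
    (h : Tendsto (fun n => (∑ i ∈ range (n + 1), a i) / a n) atTop (𝓝 F)) :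
    Tendsto (fun n => a (n + 1) / a n) atTop (𝓝 (F / (F - 1))) := by
  have hpos : ∀ n, 0 < (∑ i ∈ range (n + 1), a i) / a n := fun n =>
    div_pos (sum_pos (fun i _ => ha i) nonempty_range_add_one) (ha n)
  have hinv : Tendsto (fun n => ((∑ i ∈ range (n + 1 + 1), a i) / a (n + 1) - 1)
      / ((∑ i ∈ range (n + 1), a i) / a n)) atTop (𝓝 ((F - 1) / F)) :=
    (((tendsto_add_atTop_iff_nat 1).2 h).sub_const 1).div h (by positivity)
  rw [← inv_div]
  convert hinv.inv₀ (div_ne_zero (by linarith) (by linarith)) using 2 with n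
  rw [partialSum_div_succ ha, add_sub_cancel_left, mul_div_cancel_right₀ _ (hpos n).ne', inv_inv]

lemma tendsto_ratio_iff_tendsto_partialSum_ratio (ha : ∀ n, 0 < a n) {γ : ℝ} (hγ : 1 < γ) :
    Tendsto (fun n => a (n + 1) / a n) atTop (𝓝 γ) ↔
      Tendsto (fun n => (∑ i ∈ range (n + 1 + 1), a i) / ∑ i ∈ range (n + 1), a i) atTop
        (𝓝 γ) := by
  have hS : ∀ n, 0 < ∑ i ∈ range (n + 1), a i := fun n =>
    sum_pos (fun i _ => ha i) nonempty_range_add_one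
  have hγ0 : γ ≠ 0 := by positivity
  have hγ1 : γ - 1 ≠ 0 := sub_ne_zero.2 hγ.ne'
  constructor
  · intro h
    have hlim := tendsto_const_nhds (x := (1 : ℝ)).add <|
      h.div (tendsto_partialSum_div_of_tendsto_ratio ha hγ h) (by positivity)
    rw [show 1 + γ / (γ / (γ - 1)) = γ by field_simp; ring] at hlim
    refine hlim.congr fun n => ?_
    rw [Pi.div_apply, sum_range_succ _ (n + 1), add_div, div_self (hS n).ne',
      div_div_div_cancel_right₀ (ha n).ne']
  · intro h
    have hlim := (((tendsto_add_atTop_iff_nat 1).2 h).sub_const 1).div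
      (tendsto_const_nhds (x := (1 : ℝ)).sub (h.inv₀ hγ0)) (by
        rw [sub_ne_zero]; exact (inv_lt_one_of_one_lt₀ hγ).ne')
    rw [show (γ - 1) / (1 - γ⁻¹) = γ by field_simp] at hlim
    refine (tendsto_add_atTop_iff_nat 1).1 (hlim.congr fun n => ?_)
    have h1 := (hS n).ne'
    have h2 := (hS (n + 1)).ne'
    have h3 := (hS (n + 1 + 1)).ne'
    simp only [Pi.div_apply, sum_range_succ _ (n + 1 + 1), sum_range_succ _ (n + 1)] at h2 h3 ⊢
    field_simp
    ring

lemma tendsto_rpow_inv_of_tendsto_ratio (ha : ∀ n, 0 < a n) {γ : ℝ} (hγ : 0 < γ)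
    (h : Tendsto (fun n => a (n + 1) / a n) atTop (𝓝 γ)) :
    Tendsto (fun n : ℕ => a n ^ (n : ℝ)⁻¹) atTop (𝓝 γ) := by
  have hcesaro := ((Real.continuousAt_log hγ.ne').tendsto.comp h).cesaro
  have htelescope : ∀ n, ∑ i ∈ range n, Real.log (a (i + 1) / a i)
      = Real.log (a n) - Real.log (a 0) := fun n => by
    simp_rw [Real.log_div (ha _).ne' (ha _).ne']
    exact sum_range_sub (fun i => Real.log (a i)) n
  have hlog : Tendsto (fun n : ℕ => Real.log (a n) * (n : ℝ)⁻¹) atTop (𝓝 (Real.log γ)) := by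
    have h0 := tendsto_inv_atTop_nhds_zero_nat.mul_const (Real.log (a 0))
    rw [zero_mul] at h0
    convert hcesaro.add h0 using 2 with n
    · simp only [Function.comp_apply, htelescope]
      ring
    · rw [add_zero]
  convert (Real.continuous_exp.tendsto _).comp hlog using 1
  · exact funext fun n => Real.rpow_def_of_pos (ha n) _
  · rw [Real.exp_log hγ]

end Ratios

lemma nonempty_of_one_lt_limsup {A : Type*} (L : Set (List A))
    (h : 1 < limsup (fun ℓ : ℕ => (uCount L ℓ : ℝ) ^ (ℓ : ℝ)⁻¹) atTop) : L.Nonempty := by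
  contrapose! h
  have hzero : (fun ℓ : ℕ => (uCount L ℓ : ℝ) ^ (ℓ : ℝ)⁻¹) =ᶠ[atTop] fun _ => 0 := by
    filter_upwards [eventually_ne_atTop 0] with ℓ hℓ
    simp [uCount, h, Real.zero_rpow, hℓ]
  rw [limsup_congr hzero, limsup_const]
  exact zero_le_one

section Counting

variable {A : Type*} [Finite A] (L : Set (List A))

lemma finite_setOf_length_eq (ℓ : ℕ) : {w ∈ L | w.length = ℓ}.Finite :=
  (List.finite_length_eq A ℓ).subset fun _ hw => hw.2

lemma finite_setOf_length_le (ℓ : ℕ) : {w ∈ L | w.length ≤ ℓ}.Finite :=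
  (List.finite_length_le A ℓ).subset fun _ hw => hw.2

lemma vCount_eq_sum_uCount (n : ℕ) : vCount L n = ∑ i ∈ range (n + 1), uCount L i := by
  induction n with
  | zero =>
    simp [vCount, uCount]
  | succ n ih =>
    have hdisj : Disjoint {w ∈ L | w.length ≤ n} {w ∈ L | w.length = n + 1} :=
      Set.disjoint_left.2 fun w h1 h2 => by have := h1.2; have := h2.2; omega
    have hunion : {w ∈ L | w.length ≤ n + 1}
        = {w ∈ L | w.length ≤ n} ∪ {w ∈ L | w.length = n + 1} := by
      ext w
      simp only [Set.mem_union, Set.mem_sep_iff, ← and_or_left]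
      exact and_congr_right fun _ => by omega
    rw [sum_range_succ, ← ih, vCount, hunion,
      Set.ncard_union_eq hdisj (finite_setOf_length_le L n) (finite_setOf_length_eq L (n + 1))]
    rfl

lemma uCount_le_uCount_succ (hL : PCE L) (ℓ : ℕ) : uCount L ℓ ≤ uCount L (ℓ + 1) := by
  have hsurj : {w ∈ L | w.length = ℓ} ⊆ List.take ℓ '' {w ∈ L | w.length = ℓ + 1} := by
    rintro w ⟨hw, rfl⟩
    obtain ⟨v, hv, hwv, hne⟩ := hL.2 w hw
    have hlt : w.length < v.length := lt_of_le_of_ne hwv.length_le (mt hwv.eq_of_length hne)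
    refine ⟨v.take (w.length + 1), ⟨hL.1 v hv _ (List.take_prefix _ _), by simp; omega⟩, ?_⟩
    rw [List.take_take, min_eq_left (Nat.le_succ _), ← List.prefix_iff_eq_take.1 hwv]
  exact (Set.ncard_le_ncard hsurj ((finite_setOf_length_eq L _).image _)).trans
    (Set.ncard_image_le (finite_setOf_length_eq L _))

lemma one_le_uCount (hL : PCE L) (hne : L.Nonempty) (ℓ : ℕ) : 1 ≤ uCount L ℓ := by
  induction ℓ with
  | zero =>
    obtain ⟨w, hw⟩ := hne
    exact (Set.ncard_pos (finite_setOf_length_eq L 0)).2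
      ⟨[], hL.1 w hw [] List.nil_prefix, rfl⟩
  | succ ℓ ih => exact ih.trans (uCount_le_uCount_succ L hL ℓ)

lemma uCount_succ_le (hpre : ∀ w ∈ L, ∀ u, u <+: w → u ∈ L) (ℓ : ℕ) :
    uCount L (ℓ + 1) ≤ Nat.card A * uCount L ℓ := by
  have hsub : {w ∈ L | w.length = ℓ + 1}
      ⊆ (fun p : List A × A => p.1 ++ [p.2]) '' ({w ∈ L | w.length = ℓ} ×ˢ Set.univ) := by
    rintro w ⟨hw, hlen⟩
    obtain ⟨x, hx⟩ := List.length_eq_one_iff.1 (show (w.drop ℓ).length = 1 by simp; omega)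
    refine ⟨(w.take ℓ, x), ⟨⟨hpre w hw _ (List.take_prefix _ _), by simp; omega⟩, trivial⟩, ?_⟩
    simp only [← hx, List.take_append_drop]
  have hfin := (finite_setOf_length_eq L ℓ).prod (Set.finite_univ (α := A))
  calc uCount L (ℓ + 1) ≤ ({w ∈ L | w.length = ℓ} ×ˢ (Set.univ : Set A)).ncard :=
        (Set.ncard_le_ncard hsub (hfin.image _)).trans (Set.ncard_image_le hfin)
    _ = Nat.card A * uCount L ℓ := by rw [Set.ncard_prod, Set.ncard_univ, mul_comm]; rfl

lemma vCount_succ_le (hpre : ∀ w ∈ L, ∀ u, u <+: w → u ∈ L) (ℓ : ℕ) :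
    vCount L (ℓ + 1) ≤ (1 + Nat.card A) * vCount L ℓ := by
  have huv : uCount L ℓ ≤ vCount L ℓ := by
    rw [vCount_eq_sum_uCount]
    exact single_le_sum (fun _ _ => Nat.zero_le _) (self_mem_range_succ ℓ)
  have hsucc : vCount L (ℓ + 1) = vCount L ℓ + uCount L (ℓ + 1) := by
    rw [vCount_eq_sum_uCount, vCount_eq_sum_uCount, sum_range_succ]
  have := uCount_succ_le L hpre ℓ
  nlinarith

end Counting

theorem carry_stmt9_general {A : Type*} [Fintype A]
    (L : Set (List A)) (hL : PCE L)
    (hexp : 1 < Filter.limsup (fun ℓ : ℕ => (uCount L ℓ : ℝ) ^ ((ℓ : ℝ)⁻¹)) atTop) :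
    ((∃ F : ℝ, Tendsto
        (fun ℓ : ℕ => (∑ i ∈ Finset.range (ℓ + 1), (vCount L i : ℝ)) / (vCount L ℓ : ℝ))
        atTop (nhds F)) ↔
      (∃ γ : ℝ, Tendsto (fun ℓ : ℕ => (uCount L (ℓ + 1) : ℝ) / (uCount L ℓ : ℝ))
        atTop (nhds γ))) ∧
    ∀ γ : ℝ, Tendsto (fun ℓ : ℕ => (uCount L (ℓ + 1) : ℝ) / (uCount L ℓ : ℝ))
        atTop (nhds γ) →
      Tendsto
        (fun ℓ : ℕ => (∑ i ∈ Finset.range (ℓ + 1), (vCount L i : ℝ)) / (vCount L ℓ : ℝ))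
        atTop (nhds (γ / (γ - 1))) := by
  have hu : ∀ ℓ, 0 < (uCount L ℓ : ℝ) := fun ℓ =>
    Nat.cast_pos.2 (one_le_uCount L hL (nonempty_of_one_lt_limsup L hexp) ℓ)
  have hv : ∀ ℓ, 0 < (vCount L ℓ : ℝ) := fun ℓ => by
    rw [vCount_eq_sum_uCount, Nat.cast_sum]
    exact sum_pos (fun i _ => hu i) nonempty_range_add_one
  have forward : ∀ γ : ℝ, Tendsto (fun ℓ => (uCount L (ℓ + 1) : ℝ) / uCount L ℓ) atTop (𝓝 γ) →
      Tendsto (fun ℓ => (∑ i ∈ range (ℓ + 1), (vCount L i : ℝ)) / vCount L ℓ) atTop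
        (𝓝 (γ / (γ - 1))) := by
    intro γ hγ
    have hγ1 : 1 ≤ γ := ge_of_tendsto' hγ fun ℓ =>
      (one_le_div (hu ℓ)).2 (Nat.cast_le.2 (uCount_le_uCount_succ L hL ℓ))
    -- The limit ratio is also the exponential growth rate `limsup u_L(ℓ) ^ (1 / ℓ)`.
    have hγexp : 1 < γ := by
      rwa [(tendsto_rpow_inv_of_tendsto_ratio hu (by linarith) hγ).limsup_eq] at hexp
    refine tendsto_partialSum_div_of_tendsto_ratio hv hγexp ?_
    simpa only [vCount_eq_sum_uCount, Nat.cast_sum] using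
      (tendsto_ratio_iff_tendsto_partialSum_ratio hu hγexp).1 hγ
  refine ⟨⟨fun ⟨F, hF⟩ => ?_, fun ⟨γ, hγ⟩ => ⟨_, forward γ hγ⟩⟩, forward⟩
  have hK : ∀ ℓ, (vCount L (ℓ + 1) : ℝ) ≤ (1 + Nat.card A) * vCount L ℓ := fun ℓ => by
    exact_mod_cast vCount_succ_le L hL.1 ℓ
  have hF1 := one_lt_of_tendsto_partialSum_div hv hK hF
  have hβ : 1 < F / (F - 1) := (one_lt_div (by linarith)).2 (by linarith)
  refine ⟨_, (tendsto_ratio_iff_tendsto_partialSum_ratio hu hβ).2 ?_⟩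
  simpa only [vCount_eq_sum_uCount, Nat.cast_sum] using
    tendsto_ratio_of_tendsto_partialSum_div hv hF1 hF

/-- For a PCE language `L` with exponential growth, the length-filtered carry
propagation `FCP(L) = lim (1/v_L(ℓ)) ∑_{i=0}^ℓ v_L(i)` exists if and only if
the local growth rate `γ_L = lim u_L(ℓ+1)/u_L(ℓ)` exists, and in that case
`FCP(L) = γ_L / (γ_L - 1)`. -/
theorem carry_stmt9 {A : Type*} [Fintype A] [LinearOrder A]
    (L : Set (List A)) (hL : PCE L)
    (hexp : 1 < Filter.limsup (fun ℓ : ℕ => (uCount L ℓ : ℝ) ^ ((ℓ : ℝ)⁻¹)) atTop) :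
    ((∃ F : ℝ, Tendsto
        (fun ℓ : ℕ => (∑ i ∈ Finset.range (ℓ + 1), (vCount L i : ℝ)) / (vCount L ℓ : ℝ))
        atTop (nhds F)) ↔
      (∃ γ : ℝ, Tendsto (fun ℓ : ℕ => (uCount L (ℓ + 1) : ℝ) / (uCount L ℓ : ℝ))
        atTop (nhds γ))) ∧
    ∀ γ : ℝ, Tendsto (fun ℓ : ℕ => (uCount L (ℓ + 1) : ℝ) / (uCount L ℓ : ℝ))
        atTop (nhds γ) →
      Tendsto
        (fun ℓ : ℕ => (∑ i ∈ Finset.range (ℓ + 1), (vCount L i : ℝ)) / (vCount L ℓ : ℝ))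
        atTop (nhds (γ / (γ - 1))) :=
  carry_stmt9_general L hL hexp
end

section
/- There exists a PCE language H over a 3-letter alphabet with u_H(ℓ) = 2^ℓ for all ℓ (hence local growth rate 2 and length-filtered carry propagation 2) such that the carry propagation CP(H) = lim_{N→∞}(1/N)∑_{i<N} cp_H(i) does not exist. Specifically, along the subsequence N(ℓ) = 3·2^ℓ − 1, the averages (1/N(ℓ)) ∑_{i<N(ℓ)} cp_H(i) are eventually bounded above by 11/6 < 2. -/
/-
Level `ℓ` of `H` has `2^ℓ` words, and `H` has a unique radix enumeration, so everything can be
computed on the explicit one. Two consecutive words of a level differ only in their last letter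
when they have the same parent (carry `1`); otherwise their carry is one more than that of their
parents. Hence a complete level `ℓ` contributes `2^(ℓ+1) - ℓ - 2`, and the averages at the ends of
the levels tend to `2`. The first `q ≤ 3 · 2^ℓ` words of level `ℓ + 2` only extend the first half of
level `ℓ + 1`, so their carries add up to about `q + q/3 + q/9 + ⋯ ≤ 3q/2`. Stopping halfway
through a level, at `N = 3 · 2^ℓ - 1`, thus gives a carry sum of about `4 · 2^ℓ + 3/2 · 2^ℓ` and an
average of at most `11/6`.
-/

open Filter Topology

open Set Function

theorem List.Lex.append_of_length_eq {α : Type*} {r : α → α → Prop} {u v : List α}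
    (h : List.Lex r u v) (hl : u.length = v.length) (s t : List α) :
    List.Lex r (u ++ s) (v ++ t) := by
  induction h with
  | nil => simp at hl
  | rel h => exact .rel h
  | cons _ ih => exact .cons (ih (by simpa using hl))

section Delta

variable {α : Type*} [DecidableEq α]

theorem lcpLen_le_length : ∀ u v : List α, lcpLen u v ≤ u.length
  | a :: u, b :: v => by
    unfold lcpLen
    split_ifs
    · simpa using lcpLen_le_length u v
    · simp
  | [], _ => by simp [lcpLen]
  | _ :: _, [] => by simp [lcpLen]

theorem lcpLen_append_left (a b : List α) : ∀ u : List α,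
    lcpLen (u ++ a) (u ++ b) = u.length + lcpLen a b
  | [] => by simp
  | x :: u => by simp [lcpLen, lcpLen_append_left a b u]; omega

theorem lcpLen_append_of_ne (a b : List α) : ∀ {u v : List α}, u.length = v.length → u ≠ v →
    lcpLen (u ++ a) (v ++ b) = lcpLen u v
  | [], [], _, hne => absurd rfl hne
  | x :: u, y :: v, hl, hne => by
    by_cases hxy : x = y
    · subst hxy
      have huv : u ≠ v := fun h => hne (h ▸ rfl)
      simp [lcpLen, lcpLen_append_of_ne a b (by simpa using hl) huv]
    · simp [lcpLen, hxy]

theorem Delta_append_singleton_of_ne {u v : List α} (hl : u.length = v.length) (hne : u ≠ v)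
    (x y : α) : Delta (u ++ [x]) (v ++ [y]) = Delta u v + 1 := by
  have := lcpLen_le_length u v
  simp only [Delta, List.length_append, List.length_singleton, hl, if_true,
    lcpLen_append_of_ne _ _ hl hne]
  omega

theorem Delta_append_singleton_self (u : List α) {x y : α} (hxy : x ≠ y) :
    Delta (u ++ [x]) (u ++ [y]) = 1 := by
  simp [Delta, lcpLen_append_left, lcpLen, hxy]

end Delta

theorem eq_of_bijOn_of_rel {α : Type*} {r : α → α → Prop} (hr : ∀ a b, r a b → ¬ r b a)
    {S : Set α} {e₁ e₂ : ℕ → α} (h₁ : BijOn e₁ univ S) (h₂ : BijOn e₂ univ S)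
    (hr₁ : ∀ m n, m < n → r (e₁ m) (e₁ n)) (hr₂ : ∀ m n, m < n → r (e₂ m) (e₂ n)) :
    e₁ = e₂ := by
  choose g hg using fun n => h₂.surjOn (h₁.mapsTo (mem_univ n))
  have hg_mono : StrictMono g := by
    intro m n hmn
    by_contra! hle
    have key := hr₁ m n hmn
    rw [← (hg m).2, ← (hg n).2] at key
    rcases hle.lt_or_eq with hlt | heq
    · exact hr _ _ key (hr₂ _ _ hlt)
    · exact hr _ _ key (heq ▸ key)
  have hg_surj : Surjective g := by
    intro k
    obtain ⟨n, -, hn⟩ := h₁.surjOn (h₂.mapsTo (mem_univ k))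
    exact ⟨n, h₂.injOn (mem_univ _) (mem_univ _) ((hg n).2.trans hn)⟩
  have hg_id : g = id := congrArg DFunLike.coe
    (Subsingleton.elim (hg_mono.orderIsoOfSurjective g hg_surj) (OrderIso.refl ℕ))
  funext n
  rw [← (hg n).2, hg_id, id]

theorem RadixLt.asymm {A : Type*} [LinearOrder A] {u v : List A} (h : RadixLt u v) :
    ¬ RadixLt v u := by
  rintro (h' | ⟨hl', h'⟩) <;> rcases h with h | ⟨hl, h⟩
  all_goals first | omega | exact List.lt_asymm h h'

theorem RadixEnum.eq {A : Type*} [LinearOrder A] {L : Set (List A)} {e₁ e₂ : ℕ → List A}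
    (h₁ : RadixEnum L e₁) (h₂ : RadixEnum L e₂) : e₁ = e₂ :=
  eq_of_bijOn_of_rel (r := RadixLt) (fun _ _ => RadixLt.asymm) h₁.1 h₂.1 h₁.2 h₂.2

theorem not_exists_tendsto_of_subseq_bounds {u : ℕ → ℝ} {s t : ℕ → ℕ} {a b : ℝ} (hab : a < b)
    (hs : Tendsto s atTop atTop) (ht : Tendsto t atTop atTop)
    (hsa : ∀ᶠ k in atTop, u (s k) ≤ a) (htb : ∀ᶠ k in atTop, b ≤ u (t k)) :
    ¬ ∃ C, Tendsto u atTop (𝓝 C) := by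
  rintro ⟨C, hC⟩
  have := le_of_tendsto (hC.comp hs) hsa
  have := ge_of_tendsto (hC.comp ht) htb
  linarith

theorem tendsto_mul_two_pow_sub_one {c : ℕ} (hc : 1 ≤ c) :
    Tendsto (fun ℓ : ℕ => c * 2 ^ ℓ - 1) atTop atTop :=
  tendsto_atTop_mono (fun ℓ => by
    have := ℓ.lt_two_pow_self
    have := Nat.le_mul_of_pos_left (2 ^ ℓ) hc
    simp only [id]
    omega) tendsto_id

namespace CarryCounterexample

/- `word ℓ r` is the `r`-th word of `H ∩ A^ℓ` in lexicographic order, with `a, b, c` encoded as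
`0, 1, 2`. Of the `2^(ℓ+2)` words of length `ℓ + 2`, the first `3 · 2^ℓ` extend the first half of
level `ℓ + 1` by `a, b, c` and the last `2^ℓ` extend its second half by `b`; `parent ℓ r` and
`lastLetter ℓ r` split the `r`-th one accordingly. -/
def parent (ℓ r : ℕ) : ℕ := if r < 3 * 2 ^ ℓ then r / 3 else r - 2 ^ (ℓ + 1)

def lastLetter (ℓ r : ℕ) : Fin 3 := if r < 3 * 2 ^ ℓ then ⟨r % 3, Nat.mod_lt _ three_pos⟩ else 1

def word : ℕ → ℕ → List (Fin 3)
  | 0, _ => []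
  | 1, r => if r = 0 then [0] else [2]
  | ℓ + 2, r => word (ℓ + 1) (parent ℓ r) ++ [lastLetter ℓ r]

def H : Set (List (Fin 3)) := {w | ∃ ℓ r, r < 2 ^ ℓ ∧ w = word ℓ r}

theorem parent_lt {ℓ r : ℕ} (hr : r < 2 ^ (ℓ + 2)) : parent ℓ r < 2 ^ (ℓ + 1) := by
  have : 2 ^ (ℓ + 2) = 4 * 2 ^ ℓ := by ring
  have := pow_succ 2 ℓ
  unfold parent; split_ifs <;> omega

theorem parent_of_le {ℓ r : ℕ} (hr : r ≤ 3 * 2 ^ ℓ) : parent ℓ r = r / 3 := by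
  have := pow_succ 2 ℓ
  unfold parent; split_ifs <;> omega

theorem parent_two_pow_sub_one (ℓ : ℕ) : parent ℓ (2 ^ (ℓ + 2) - 1) = 2 ^ (ℓ + 1) - 1 := by
  have : 2 ^ (ℓ + 2) = 4 * 2 ^ ℓ := by ring
  have := pow_succ 2 ℓ; have := Nat.one_le_two_pow (n := ℓ)
  unfold parent; split_ifs <;> omega

theorem parent_succ (ℓ r : ℕ) :
    parent ℓ (r + 1) = parent ℓ r ∨ parent ℓ (r + 1) = parent ℓ r + 1 := by
  have := pow_succ 2 ℓ
  unfold parent; split_ifs <;> omega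

theorem lastLetter_lt_of_parent_eq {ℓ r : ℕ} (h : parent ℓ (r + 1) = parent ℓ r) :
    lastLetter ℓ r < lastLetter ℓ (r + 1) := by
  have := pow_succ 2 ℓ; have := Nat.one_le_two_pow (n := ℓ)
  unfold parent at h
  unfold lastLetter
  split_ifs at h ⊢ <;> first | omega | (rw [Fin.mk_lt_mk]; omega)

theorem exists_parent_eq {ℓ r : ℕ} (hr : r < 2 ^ (ℓ + 1)) :
    ∃ c < 2 ^ (ℓ + 2), parent ℓ c = r := by
  have : 2 ^ (ℓ + 2) = 4 * 2 ^ ℓ := by ring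
  have := pow_succ 2 ℓ
  by_cases h : r < 2 ^ ℓ
  · exact ⟨3 * r, by omega, by unfold parent; split_ifs <;> omega⟩
  · exact ⟨r + 2 ^ (ℓ + 1), by omega, by unfold parent; split_ifs <;> omega⟩

theorem length_word : ∀ ℓ r, (word ℓ r).length = ℓ
  | 0, _ => rfl
  | 1, r => by unfold word; split_ifs <;> rfl
  | ℓ + 2, r => by simp [word, length_word (ℓ + 1)]

theorem word_lt_succ : ∀ ℓ r, r + 1 < 2 ^ ℓ → word ℓ r < word ℓ (r + 1)
  | 0, r, hr => by simp at hr
  | 1, r, hr => by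
    obtain rfl : r = 0 := by omega
    decide
  | ℓ + 2, r, hr => by
    unfold word
    rcases parent_succ ℓ r with h | h
    · rw [h]
      exact List.append_left_lt (List.Lex.rel (lastLetter_lt_of_parent_eq h))
    · rw [h]
      refine List.Lex.append_of_length_eq (word_lt_succ (ℓ + 1) _ ?_) (by simp [length_word]) _ _
      exact h ▸ parent_lt hr

theorem word_strictMonoOn (ℓ : ℕ) : StrictMonoOn (word ℓ) (Iio (2 ^ ℓ)) := by
  have := Nat.one_le_two_pow (n := ℓ)
  refine (strictMonoOn_Iic_of_lt_succ (n := 2 ^ ℓ - 1) fun r hr => ?_).mono fun s hs => ?_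
  · exact word_lt_succ ℓ r (by omega)
  · simp only [mem_Iio, mem_Iic] at hs ⊢; omega

theorem word_mem_H {ℓ r : ℕ} (hr : r < 2 ^ ℓ) : word ℓ r ∈ H := ⟨ℓ, r, hr, rfl⟩

theorem take_word : ∀ ℓ r k, r < 2 ^ ℓ → k ≤ ℓ → ∃ s < 2 ^ k, (word ℓ r).take k = word k s
  | ℓ + 2, r, k + 1, hr, hk => by
    rcases hk.lt_or_eq with hk | hk
    · obtain ⟨s, hs, he⟩ := take_word (ℓ + 1) (parent ℓ r) (k + 1) (parent_lt hr) (by omega)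
      exact ⟨s, hs, by rw [word, List.take_append_of_le_length (by rw [length_word]; omega), he]⟩
    · obtain rfl : k = ℓ + 1 := by omega
      exact ⟨r, hr, List.take_of_length_le (length_word _ r).le⟩
  | 1, r, 1, hr, _ => ⟨r, hr, List.take_of_length_le (length_word 1 r).le⟩
  | _, _, 0, _, _ => ⟨0, Nat.one_pos, rfl⟩
  | 0, _, _ + 1, _, hk => absurd hk (by omega)
  | 1, _, _ + 2, _, hk => absurd hk (by omega)

theorem exists_word_prefix {ℓ r : ℕ} (hr : r < 2 ^ ℓ) :
    ∃ c < 2 ^ (ℓ + 1), word ℓ r <+: word (ℓ + 1) c := by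
  cases ℓ with
  | zero => exact ⟨0, by norm_num, List.nil_prefix⟩
  | succ ℓ =>
    obtain ⟨c, hc, rfl⟩ := exists_parent_eq hr
    exact ⟨c, hc, List.prefix_append _ _⟩

theorem pce_H : PCE H := by
  constructor
  · rintro _ ⟨ℓ, r, hr, rfl⟩ u hu
    have hk : u.length ≤ ℓ := length_word ℓ r ▸ hu.length_le
    obtain ⟨s, hs, he⟩ := take_word ℓ r u.length hr hk
    rw [List.prefix_iff_eq_take.1 hu, he]
    exact word_mem_H hs
  · rintro _ ⟨ℓ, r, hr, rfl⟩
    obtain ⟨c, hc, hpre⟩ := exists_word_prefix hr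
    refine ⟨word (ℓ + 1) c, word_mem_H hc, hpre, fun he => ?_⟩
    simpa [length_word] using congrArg List.length he

theorem uCount_H (ℓ : ℕ) : uCount H ℓ = 2 ^ ℓ := by
  have hset : {w ∈ H | w.length = ℓ} = word ℓ '' Iio (2 ^ ℓ) := by
    ext w
    constructor
    · rintro ⟨⟨k, r, hr, rfl⟩, hlen⟩
      rw [length_word] at hlen
      subst hlen
      exact ⟨r, hr, rfl⟩
    · rintro ⟨r, hr, rfl⟩
      exact ⟨word_mem_H hr, length_word ℓ r⟩
  rw [uCount, hset, (word_strictMonoOn ℓ).injOn.ncard_image, ncard_Iio_nat]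

def enum (n : ℕ) : List (Fin 3) := word (Nat.log 2 (n + 1)) (n + 1 - 2 ^ Nat.log 2 (n + 1))

theorem enum_two_pow_sub_one_add {ℓ r : ℕ} (hr : r < 2 ^ ℓ) : enum (2 ^ ℓ - 1 + r) = word ℓ r := by
  have := pow_succ 2 ℓ
  have hlog : Nat.log 2 (2 ^ ℓ - 1 + r + 1) = ℓ :=
    Nat.log_eq_of_pow_le_of_lt_pow (by omega) (by omega)
  rw [enum, hlog]
  congr 1
  omega

theorem exists_eq_two_pow_sub_one_add (n : ℕ) : ∃ ℓ r, r < 2 ^ ℓ ∧ n = 2 ^ ℓ - 1 + r := by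
  have hle := Nat.pow_log_le_self 2 (x := n + 1) (by omega)
  have hlt := Nat.lt_pow_succ_log_self one_lt_two (n + 1)
  rw [pow_succ] at hlt
  exact ⟨Nat.log 2 (n + 1), n + 1 - 2 ^ Nat.log 2 (n + 1), by omega, by omega⟩

theorem radixLt_enum {m n : ℕ} (hmn : m < n) : RadixLt (enum m) (enum n) := by
  obtain ⟨a, r, hr, rfl⟩ := exists_eq_two_pow_sub_one_add m
  obtain ⟨b, s, hs, rfl⟩ := exists_eq_two_pow_sub_one_add n
  rw [enum_two_pow_sub_one_add hr, enum_two_pow_sub_one_add hs]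
  rcases lt_trichotomy a b with hab | rfl | hab
  · left
    simpa [length_word] using hab
  · exact Or.inr ⟨by simp [length_word], word_strictMonoOn a hr hs (by omega)⟩
  · have := Nat.pow_le_pow_right two_pos hab
    rw [pow_succ] at this
    omega

theorem radixEnum_enum : RadixEnum H enum := by
  refine ⟨⟨fun n _ => ?_, fun m _ n _ he => ?_, ?_⟩, fun m n => radixLt_enum⟩
  · obtain ⟨ℓ, r, hr, rfl⟩ := exists_eq_two_pow_sub_one_add n
    exact enum_two_pow_sub_one_add hr ▸ word_mem_H hr
  · by_contra hne
    rcases Nat.lt_or_gt_of_ne hne with h | h <;>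
    · have h := radixLt_enum h
      rw [he] at h
      exact h.asymm h
  · rintro _ ⟨ℓ, r, hr, rfl⟩
    exact ⟨_, mem_univ _, enum_two_pow_sub_one_add hr⟩

def carry : ℕ → ℕ → ℕ
  | 0, _ => 0
  | 1, _ => 1
  | ℓ + 2, r => if parent ℓ (r + 1) = parent ℓ r then 1 else carry (ℓ + 1) (parent ℓ r) + 1

theorem Delta_word_succ : ∀ ℓ r, r + 1 < 2 ^ ℓ → Delta (word ℓ r) (word ℓ (r + 1)) = carry ℓ r
  | 0, r, hr => by simp at hr
  | 1, r, hr => by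
    obtain rfl : r = 0 := by omega
    decide
  | ℓ + 2, r, hr => by
    unfold word
    rw [carry]
    rcases parent_succ ℓ r with h | h
    · rw [if_pos h, h]
      exact Delta_append_singleton_self _ (lastLetter_lt_of_parent_eq h).ne
    · have hlt : parent ℓ r + 1 < 2 ^ (ℓ + 1) := h ▸ parent_lt hr
      rw [if_neg (by omega), h, Delta_append_singleton_of_ne (by simp [length_word])
        (word_lt_succ (ℓ + 1) _ hlt).ne, Delta_word_succ (ℓ + 1) _ hlt]

def carrySum (ℓ q : ℕ) : ℕ := ∑ r ∈ Finset.range q, carry ℓ r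

theorem carrySum_succ (ℓ q : ℕ) : carrySum ℓ (q + 1) = carrySum ℓ q + carry ℓ q :=
  Finset.sum_range_succ _ _

theorem carrySum_one (q : ℕ) : carrySum 1 q = q := by
  simp [carrySum, carry]

theorem carrySum_add_two (ℓ q : ℕ) : carrySum (ℓ + 2) q = q + carrySum (ℓ + 1) (parent ℓ q) := by
  induction q with
  | zero => simp [carrySum, parent]
  | succ q ih =>
    rw [carrySum_succ, ih, carry]
    rcases parent_succ ℓ q with h | h
    · rw [if_pos h, h]
      omega
    · rw [if_neg (by omega), h, carrySum_succ]
      omega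

theorem carrySum_two_pow_sub_one : ∀ ℓ, carrySum ℓ (2 ^ ℓ - 1) + ℓ + 2 = 2 ^ (ℓ + 1)
  | 0 => by simp [carrySum]
  | 1 => by simp [carrySum, carry]
  | ℓ + 2 => by
    rw [carrySum_add_two, parent_two_pow_sub_one]
    have := carrySum_two_pow_sub_one (ℓ + 1)
    have : 2 ^ (ℓ + 2) = 4 * 2 ^ ℓ := by ring
    have : 2 ^ (ℓ + 3) = 8 * 2 ^ ℓ := by ring
    have := pow_succ 2 ℓ; have := Nat.one_le_two_pow (n := ℓ)
    omega

theorem two_mul_carrySum_le : ∀ ℓ q, q ≤ 3 * 2 ^ ℓ → 2 * carrySum (ℓ + 2) q ≤ 3 * q + 2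
  | 0, q, hq => by
    rw [carrySum_add_two, parent_of_le hq, carrySum_one]
    omega
  | ℓ + 1, q, hq => by
    have := pow_succ 2 ℓ
    rw [carrySum_add_two, parent_of_le hq]
    have : 2 * carrySum (ℓ + 1 + 1) (q / 3) ≤ 3 * (q / 3) + 2 :=
      two_mul_carrySum_le ℓ (q / 3) (by omega)
    omega

def carryTotal (N : ℕ) : ℕ := ∑ i ∈ Finset.range N, Delta (enum i) (enum (i + 1))

theorem carryTotal_succ (N : ℕ) :
    carryTotal (N + 1) = carryTotal N + Delta (enum N) (enum (N + 1)) :=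
  Finset.sum_range_succ _ _

theorem carryTotal_two_pow_sub_one_add {ℓ r : ℕ} (hr : r < 2 ^ ℓ) :
    carryTotal (2 ^ ℓ - 1 + r) = carryTotal (2 ^ ℓ - 1) + carrySum ℓ r := by
  induction r with
  | zero => simp [carrySum]
  | succ r ih =>
    rw [← add_assoc, carryTotal_succ, ih (by omega), enum_two_pow_sub_one_add (by omega),
      add_assoc _ r 1, enum_two_pow_sub_one_add hr, Delta_word_succ ℓ r hr, carrySum_succ,
      add_assoc]

theorem carryTotal_two_pow_succ_sub_one (ℓ : ℕ) :
    carryTotal (2 ^ (ℓ + 1) - 1) = carryTotal (2 ^ ℓ - 1 + (2 ^ ℓ - 1)) + (ℓ + 1) := by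
  have := pow_succ 2 ℓ; have := Nat.one_le_two_pow (n := ℓ)
  have hsplit : 2 ^ (ℓ + 1) - 1 = 2 ^ ℓ - 1 + (2 ^ ℓ - 1) + 1 := by omega
  have hnext : enum (2 ^ ℓ - 1 + (2 ^ ℓ - 1) + 1) = word (ℓ + 1) 0 := by
    rw [← hsplit, ← enum_two_pow_sub_one_add (Nat.two_pow_pos _), add_zero]
  rw [hsplit, carryTotal_succ, hnext, enum_two_pow_sub_one_add (by omega)]
  simp [Delta, length_word]

theorem carryTotal_two_pow_sub_one (ℓ : ℕ) : carryTotal (2 ^ ℓ - 1) + ℓ + 2 = 2 ^ (ℓ + 1) := by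
  induction ℓ with
  | zero => simp [carryTotal]
  | succ ℓ ih =>
    have := Nat.one_le_two_pow (n := ℓ)
    rw [carryTotal_two_pow_succ_sub_one, carryTotal_two_pow_sub_one_add (by omega)]
    have := carrySum_two_pow_sub_one ℓ
    have := pow_succ 2 (ℓ + 1); have := pow_succ 2 ℓ
    omega

theorem six_mul_carryTotal_le (ℓ : ℕ) :
    6 * carryTotal (3 * 2 ^ (ℓ + 1) - 1) + 11 ≤ 33 * 2 ^ (ℓ + 1) := by
  have : 2 ^ (ℓ + 1) = 2 * 2 ^ ℓ := by ring
  have : 2 ^ (ℓ + 2) = 4 * 2 ^ ℓ := by ring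
  have : 2 ^ (ℓ + 3) = 8 * 2 ^ ℓ := by ring
  have := Nat.one_le_two_pow (n := ℓ)
  have hsplit : 3 * 2 ^ (ℓ + 1) - 1 = 2 ^ (ℓ + 2) - 1 + 2 ^ (ℓ + 1) := by omega
  have hr : 2 ^ (ℓ + 1) < 2 ^ (ℓ + 2) := by omega
  rw [hsplit, carryTotal_two_pow_sub_one_add hr]
  have := carryTotal_two_pow_sub_one (ℓ + 2)
  have := two_mul_carrySum_le ℓ (2 ^ (ℓ + 1)) (by omega)
  omega

theorem twelve_mul_add_one_le_two_pow {ℓ : ℕ} (hℓ : 7 ≤ ℓ) : 12 * ℓ + 1 ≤ 2 ^ ℓ := by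
  induction ℓ, hℓ using Nat.le_induction with
  | base => norm_num
  | succ ℓ _ ih =>
    rw [pow_succ]
    omega

theorem le_twelve_mul_carryTotal {ℓ : ℕ} (hℓ : 7 ≤ ℓ) :
    23 * (2 ^ ℓ - 1) ≤ 12 * carryTotal (2 ^ ℓ - 1) := by
  have := carryTotal_two_pow_sub_one ℓ
  have := twelve_mul_add_one_le_two_pow hℓ
  have := pow_succ 2 ℓ
  omega

theorem carryTotal_div_le {ℓ : ℕ} (hℓ : 1 ≤ ℓ) :
    (carryTotal (3 * 2 ^ ℓ - 1) : ℝ) / (3 * 2 ^ ℓ - 1) ≤ 11 / 6 := by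
  obtain ⟨k, rfl⟩ := Nat.exists_eq_add_of_le' hℓ
  have hk : (6 * carryTotal (3 * 2 ^ (k + 1) - 1) + 11 : ℝ) ≤ 33 * 2 ^ (k + 1) := by
    exact_mod_cast six_mul_carryTotal_le k
  have : (1 : ℝ) ≤ 2 ^ (k + 1) := one_le_pow₀ one_le_two
  rw [div_le_iff₀ (by linarith)]
  linarith

theorem le_carryTotal_div {ℓ : ℕ} (hℓ : 7 ≤ ℓ) :
    23 / 12 ≤ (carryTotal (2 ^ ℓ - 1) : ℝ) / (2 ^ ℓ - 1 : ℕ) := by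
  have hpos : 0 < 2 ^ ℓ - 1 := by
    have := Nat.one_lt_two_pow (n := ℓ) (by omega)
    omega
  have h : (23 * (2 ^ ℓ - 1 : ℕ) : ℝ) ≤ 12 * carryTotal (2 ^ ℓ - 1) := by
    exact_mod_cast le_twelve_mul_carryTotal hℓ
  rw [le_div_iff₀ (by exact_mod_cast hpos)]
  linarith

end CarryCounterexample

open CarryCounterexample

/-- There exists a PCE language `H` over a 3-letter alphabet with exactly `2^ℓ`
words of each length `ℓ` (hence local growth rate 2) whose carry propagation
`lim (1/N) ∑_{i<N} cp_H(i)` does not exist; moreover along the subsequence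
`N(ℓ) = 3·2^ℓ - 1` the averages are eventually at most `11/6`. -/
theorem carry_stmt11 :
    ∃ H : Set (List (Fin 3)), PCE H ∧ (∀ ℓ : ℕ, uCount H ℓ = 2 ^ ℓ) ∧
      ∀ rep : ℕ → List (Fin 3), RadixEnum H rep →
        (¬ ∃ C : ℝ, Tendsto
            (fun N : ℕ => (∑ i ∈ Finset.range N, (Delta (rep i) (rep (i + 1)) : ℝ)) / N)
            atTop (nhds C)) ∧
        (∀ᶠ ℓ : ℕ in atTop,
          (∑ i ∈ Finset.range (3 * 2 ^ ℓ - 1), (Delta (rep i) (rep (i + 1)) : ℝ)) /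
              (3 * 2 ^ ℓ - 1 : ℝ) ≤ 11 / 6) := by
  refine ⟨H, pce_H, uCount_H, fun rep hrep => ?_⟩
  obtain rfl := hrep.eq radixEnum_enum
  have hsum (N : ℕ) : ∑ i ∈ Finset.range N, (Delta (enum i) (enum (i + 1)) : ℝ) = carryTotal N := by
    simp [carryTotal]
  simp only [hsum]
  have hupper : ∀ᶠ ℓ : ℕ in atTop, (carryTotal (3 * 2 ^ ℓ - 1) : ℝ) / (3 * 2 ^ ℓ - 1) ≤ 11 / 6 :=
    eventually_atTop.2 ⟨1, fun ℓ => carryTotal_div_le⟩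
  refine ⟨not_exists_tendsto_of_subseq_bounds (by norm_num : (11 / 6 : ℝ) < 23 / 12)
    (tendsto_mul_two_pow_sub_one (c := 3) (by norm_num))
    (by simpa using tendsto_mul_two_pow_sub_one le_rfl) (hupper.mono fun ℓ h => ?_)
    (eventually_atTop.2 ⟨7, fun ℓ => le_carryTotal_div⟩), hupper⟩
  rw [Nat.cast_sub (by have := Nat.one_le_two_pow (n := ℓ); omega)]
  push_cast
  exact h
end

section
/- Let G = (G_ℓ) be a basis for a greedy numeration system (strictly increasing, G_0 = 1) and μ any τ_G-invariant Borel probability measure on the compactification K_G. Then for every ℓ, μ([g_ℓ]) ≤ 1/G_ℓ, where g_ℓ is the greedy G-expansion of G_ℓ − 1 and [g_ℓ] is the cylinder of left-infinite sequences in K_G ending in g_ℓ. -/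
/-! On `K_G` the odometer adds one to the value `∑_{t<ℓ} s_t G_t` of the last `ℓ` digits, unless
a carry leaves position `ℓ - 1`, in which case this value drops to `0`. By invariance the level
sets of this value at `0, 1, …, G_ℓ - 1` therefore have non-increasing measures; being disjoint,
the last one, which contains `[g_ℓ]`, has measure at most `1 / G_ℓ`. -/

open Filter Topology

/-- Remainders of the greedy algorithm for the basis `G`, run top-down from
position `N - 1` (for `N < G N`, all digits of `N` lie below position `N`):
`greedyRem G N t` is the part of `N` remaining to be represented on the
positions `< N - t`. -/
def greedyRem (G : ℕ → ℕ) (N : ℕ) : ℕ → ℕ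
  | 0 => N
  | t + 1 => greedyRem G N t % G (N - t - 1)

/-- The digit at position `j` (least significant digit at position `0`) of the
greedy `G`-expansion of `N`, padded with zeros. -/
def greedyDigit (G : ℕ → ℕ) (N j : ℕ) : ℕ :=
  if j < N then greedyRem G N (N - 1 - j) / G j else 0

/-- The compactification `K_G` of the greedy numeration system `G`: the set of
left-infinite words (written with digit `s i` at position `i`) all of whose
finite suffixes `s_{[j,0]}` are zero-padded greedy `G`-expansions. -/
def greedyCompactification (G : ℕ → ℕ) : Set (ℕ → ℕ) :=
  {s | ∀ j, ∃ N, ∀ i ≤ j, s i = greedyDigit G N i}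

open MeasureTheory
open scoped ENNReal

section Odometer

variable {α : Type*} [MeasurableSpace α] {μ : Measure α} {τ : α → α} {f : α → ℕ}

theorem measure_preimage_succ_le (hinv : ∀ B, MeasurableSet B → μ (τ ⁻¹' B) = μ B)
    (hf : Measurable f) (hstep : ∀ᵐ s ∂μ, f (τ s) = f s + 1 ∨ f (τ s) = 0) (i : ℕ) :
    μ (f ⁻¹' {i + 1}) ≤ μ (f ⁻¹' {i}) := by
  rw [← hinv _ (hf (measurableSet_singleton _))]
  refine measure_mono_ae ?_
  filter_upwards [hstep] with s hs hτs
  change f (τ s) = i + 1 at hτs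
  change f s = i
  omega

theorem measure_preimage_le_inv_succ [IsProbabilityMeasure μ]
    (hinv : ∀ B, MeasurableSet B → μ (τ ⁻¹' B) = μ B)
    (hf : Measurable f) (hstep : ∀ᵐ s ∂μ, f (τ s) = f s + 1 ∨ f (τ s) = 0) (m : ℕ) :
    μ (f ⁻¹' {m}) ≤ ((m + 1 : ℕ) : ℝ≥0∞)⁻¹ := by
  have hanti : Antitone fun i => μ (f ⁻¹' {i}) :=
    antitone_nat_of_succ_le (measure_preimage_succ_le hinv hf hstep)
  rw [ENNReal.le_inv_iff_mul_le]
  calc μ (f ⁻¹' {m}) * (m + 1 : ℕ)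
      = ∑ _i ∈ Finset.range (m + 1), μ (f ⁻¹' {m}) := by
        rw [Finset.sum_const, Finset.card_range, nsmul_eq_mul, mul_comm]
    _ ≤ ∑ i ∈ Finset.range (m + 1), μ (f ⁻¹' {i}) :=
        Finset.sum_le_sum fun i hi => hanti (Nat.lt_succ_iff.mp (Finset.mem_range.mp hi))
    _ = μ (f ⁻¹' ↑(Finset.range (m + 1))) :=
        sum_measure_preimage_singleton _ fun i _ => hf (measurableSet_singleton i)
    _ ≤ 1 := prob_le_one

end Odometer

namespace Nat

theorem lt_apply_of_strictMono {G : ℕ → ℕ} (hG : StrictMono G) (hG0 : 0 < G 0) (n : ℕ) :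
    n < G n :=
  Nat.lt_of_lt_of_le (Nat.lt_add_of_pos_right hG0) (hG.add_le_nat n 0)

theorem add_one_mod_eq_or (a n : ℕ) : (a + 1) % n = a % n + 1 ∨ (a + 1) % n = 0 := by
  rw [← Nat.mod_add_mod]
  rcases Nat.eq_zero_or_pos n with rfl | hn
  · simp
  rcases Nat.lt_or_eq_of_le (Nat.mod_lt a hn) with h | h
  · left; exact Nat.mod_eq_of_lt h
  · right; rw [show a % n + 1 = n from h, Nat.mod_self]

end Nat

namespace Greedy

variable {G : ℕ → ℕ}

/-- The value of the `ℓ` lowest greedy digits of `X` (`suffixValue_greedyDigit`), read off the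
remainders of the greedy algorithm. -/
def lowPart (G : ℕ → ℕ) (X ℓ : ℕ) : ℕ :=
  if ℓ ≤ X then greedyRem G X (X - ℓ) else X

theorem lowPart_of_le {X ℓ : ℕ} (h : X ≤ ℓ) : lowPart G X ℓ = X := by
  unfold lowPart
  split_ifs
  · rw [show X - ℓ = 0 by omega, greedyRem]
  · rfl

theorem lowPart_eq_mod (hG : ∀ n, n < G n) (X ℓ : ℕ) :
    lowPart G X ℓ = lowPart G X (ℓ + 1) % G ℓ := by
  rcases lt_trichotomy ℓ X with h | rfl | h
  · unfold lowPart
    rw [if_pos h.le, if_pos (show ℓ + 1 ≤ X from h), show X - ℓ = X - (ℓ + 1) + 1 by omega,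
      greedyRem, show X - (X - (ℓ + 1)) - 1 = ℓ by omega]
  · rw [lowPart_of_le le_rfl, lowPart_of_le (Nat.le_succ ℓ), Nat.mod_eq_of_lt (hG ℓ)]
  · rw [lowPart_of_le h.le, lowPart_of_le (by omega), Nat.mod_eq_of_lt (by have := hG ℓ; omega)]

theorem lowPart_lt (hG : ∀ n, n < G n) (X ℓ : ℕ) : lowPart G X ℓ < G ℓ := by
  rw [lowPart_eq_mod hG]
  exact Nat.mod_lt _ (by have := hG ℓ; omega)

theorem lowPart_congr (hG : ∀ n, n < G n) {X Y m ℓ : ℕ} (hm : lowPart G X m = lowPart G Y m)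
    (hℓ : ℓ ≤ m) : lowPart G X ℓ = lowPart G Y ℓ := by
  induction hℓ using Nat.decreasingInduction with
  | self => exact hm
  | of_succ k _ ih => rw [lowPart_eq_mod hG, ih, ← lowPart_eq_mod hG]

theorem lowPart_of_lt (hG : ∀ n, n < G n) (hmono : Monotone G) {X ℓ : ℕ} (h : X < G ℓ) :
    lowPart G X ℓ = X := by
  obtain ⟨m, hℓm, hXm⟩ : ∃ m, ℓ ≤ m ∧ X ≤ m := ⟨max ℓ X, le_max_left _ _, le_max_right _ _⟩
  revert h
  induction hℓm using Nat.decreasingInduction with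
  | self => exact fun _ => lowPart_of_le hXm
  | of_succ k _ ih =>
    intro hk
    rw [lowPart_eq_mod hG, ih (hk.trans_le (hmono k.le_succ)), Nat.mod_eq_of_lt hk]

theorem lowPart_lowPart (hG : ∀ n, n < G n) (hmono : Monotone G) (X : ℕ) {ℓ m : ℕ}
    (h : ℓ ≤ m) : lowPart G (lowPart G X m) ℓ = lowPart G X ℓ :=
  lowPart_congr hG (lowPart_of_lt hG hmono (lowPart_lt hG X m)) h

theorem lowPart_succ (hG : ∀ n, n < G n) (X ℓ : ℕ) :
    lowPart G (X + 1) ℓ = lowPart G X ℓ + 1 ∨ lowPart G (X + 1) ℓ = 0 := by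
  rcases le_or_gt ℓ (X + 1) with hℓ | hℓ
  · induction hℓ using Nat.decreasingInduction with
    | self => left; rw [lowPart_of_le le_rfl, lowPart_of_le (Nat.le_succ X)]
    | of_succ k _ ih =>
      rw [lowPart_eq_mod hG (X + 1), lowPart_eq_mod hG X]
      rcases ih with h | h
      · rw [h]; exact Nat.add_one_mod_eq_or _ _
      · right; rw [h, Nat.zero_mod]
  · left; rw [lowPart_of_le hℓ.le, lowPart_of_le (by omega)]

theorem greedyDigit_eq_div (hG : ∀ n, n < G n) (X j : ℕ) :
    greedyDigit G X j = lowPart G X (j + 1) / G j := by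
  unfold greedyDigit lowPart
  split_ifs
  · rw [show X - 1 - j = X - (j + 1) by omega]
  · omega
  · omega
  · exact (Nat.div_eq_of_lt (by have := hG j; omega)).symm

/-- The integer represented by the suffix `s_{[ℓ-1,0]}`. -/
def suffixValue (G : ℕ → ℕ) (ℓ : ℕ) (s : ℕ → ℕ) : ℕ :=
  ∑ t ∈ Finset.range ℓ, s t * G t

theorem suffixValue_congr {ℓ : ℕ} {s s' : ℕ → ℕ} (h : ∀ t < ℓ, s t = s' t) :
    suffixValue G ℓ s = suffixValue G ℓ s' :=
  Finset.sum_congr rfl fun t ht => by rw [h t (Finset.mem_range.mp ht)]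

theorem measurable_suffixValue (ℓ : ℕ) : Measurable (suffixValue G ℓ) :=
  Finset.measurable_sum _ fun t _ =>
    (Measurable.of_discrete (f := fun n : ℕ => n * G t)).comp (measurable_pi_apply t)

theorem suffixValue_greedyDigit (hG : ∀ n, n < G n) (hG0 : G 0 = 1) (X ℓ : ℕ) :
    suffixValue G ℓ (greedyDigit G X) = lowPart G X ℓ := by
  induction ℓ with
  | zero => rw [suffixValue, Finset.sum_range_zero, lowPart_eq_mod hG, hG0, Nat.mod_one]
  | succ ℓ ih =>
    rw [suffixValue, Finset.sum_range_succ, ← suffixValue, ih, greedyDigit_eq_div hG,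
      lowPart_eq_mod hG X ℓ, Nat.mod_add_div']

theorem suffixValue_odometer (hG : StrictMono G) (hG0 : G 0 = 1) {s t : ℕ → ℕ}
    (hs : s ∈ greedyCompactification G)
    (ht : ∀ i, ∀ᶠ j in atTop, greedyDigit G (suffixValue G (j + 1) s + 1) i = t i) (ℓ : ℕ) :
    suffixValue G ℓ t = suffixValue G ℓ s + 1 ∨ suffixValue G ℓ t = 0 := by
  have hlt := Nat.lt_apply_of_strictMono hG (hG0 ▸ Nat.one_pos)
  have hev : ∀ᶠ j in atTop, ∀ i ∈ Finset.range ℓ,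
      greedyDigit G (suffixValue G (j + 1) s + 1) i = t i :=
    (eventually_all_finset _).mpr fun i _ => ht i
  obtain ⟨j, hjℓ, hj⟩ := ((eventually_ge_atTop ℓ).and hev).exists
  obtain ⟨N, hN⟩ := hs j
  have hsN : ∀ m ≤ j + 1, suffixValue G m s = lowPart G N m := fun m hm => by
    rw [← suffixValue_greedyDigit hlt hG0]
    exact suffixValue_congr fun i hi => hN i (by omega)
  have htM : suffixValue G ℓ t = lowPart G (lowPart G N (j + 1) + 1) ℓ := by
    rw [← suffixValue_greedyDigit hlt hG0, ← hsN _ le_rfl]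
    exact suffixValue_congr fun i hi => (hj i (Finset.mem_range.mpr hi)).symm
  rw [htM, hsN ℓ (by omega), ← lowPart_lowPart hlt hG.monotone N (by omega : ℓ ≤ j + 1)]
  exact lowPart_succ hlt _ ℓ

end Greedy

open Greedy

theorem carry_stmt17_general (G : ℕ → ℕ) (hG : StrictMono G) (hG0 : G 0 = 1)
    (τ : (ℕ → ℕ) → (ℕ → ℕ))
    (hτ : ∀ s ∈ greedyCompactification G, ∀ i : ℕ, ∀ᶠ j : ℕ in atTop,
      greedyDigit G ((∑ t ∈ Finset.range (j + 1), s t * G t) + 1) i = τ s i)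
    (μ : MeasureTheory.Measure (ℕ → ℕ)) [MeasureTheory.IsProbabilityMeasure μ]
    (hsupp : μ (greedyCompactification G)ᶜ = 0)
    (hinv : ∀ B : Set (ℕ → ℕ), MeasurableSet B → μ (τ ⁻¹' B) = μ B)
    (ℓ : ℕ) :
    μ {s ∈ greedyCompactification G | ∀ j < ℓ, s j = greedyDigit G (G ℓ - 1) j}
      ≤ (G ℓ : ENNReal)⁻¹ := by
  have hlt := Nat.lt_apply_of_strictMono hG (hG0 ▸ Nat.one_pos)
  have hstep : ∀ᵐ s ∂μ, suffixValue G ℓ (τ s) = suffixValue G ℓ s + 1 ∨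
      suffixValue G ℓ (τ s) = 0 := by
    filter_upwards [mem_ae_iff.mpr hsupp] with s hs
    exact suffixValue_odometer hG hG0 hs (hτ s hs) ℓ
  have hcyl : {s ∈ greedyCompactification G | ∀ j < ℓ, s j = greedyDigit G (G ℓ - 1) j} ⊆
      suffixValue G ℓ ⁻¹' {G ℓ - 1} := fun s hs => by
    change suffixValue G ℓ s = G ℓ - 1
    rw [suffixValue_congr hs.2, suffixValue_greedyDigit hlt hG0,
      lowPart_of_lt hlt hG.monotone (Nat.sub_lt (hlt ℓ).pos one_pos)]
  calc _ ≤ μ (suffixValue G ℓ ⁻¹' {G ℓ - 1}) := measure_mono hcyl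
    _ ≤ ((G ℓ - 1 + 1 : ℕ) : ℝ≥0∞)⁻¹ :=
      measure_preimage_le_inv_succ hinv (measurable_suffixValue ℓ) hstep _
    _ = (G ℓ : ℝ≥0∞)⁻¹ := by rw [Nat.sub_add_cancel (hlt ℓ).pos]

/-- For a greedy numeration system with basis `G` (strictly increasing,
`G 0 = 1`), any odometer `τ` (i.e. `τ s = lim_j Succ(s_{[j,0]})` pointwise on
`K_G`) and any `τ`-invariant Borel probability measure `μ` carried by `K_G`,
the cylinder of `g_ℓ = rep_G(G_ℓ - 1)` has measure at most `1 / G_ℓ`. -/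
theorem carry_stmt17 (G : ℕ → ℕ) (hG : StrictMono G) (hG0 : G 0 = 1)
    (τ : (ℕ → ℕ) → (ℕ → ℕ))
    (hτmem : Set.MapsTo τ (greedyCompactification G) (greedyCompactification G))
    (hτ : ∀ s ∈ greedyCompactification G, ∀ i : ℕ, ∀ᶠ j : ℕ in atTop,
      greedyDigit G ((∑ t ∈ Finset.range (j + 1), s t * G t) + 1) i = τ s i)
    (μ : MeasureTheory.Measure (ℕ → ℕ)) [MeasureTheory.IsProbabilityMeasure μ]
    (hsupp : μ (greedyCompactification G)ᶜ = 0)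
    (hinv : ∀ B : Set (ℕ → ℕ), MeasurableSet B → μ (τ ⁻¹' B) = μ B)
    (ℓ : ℕ) :
    μ {s ∈ greedyCompactification G | ∀ j < ℓ, s j = greedyDigit G (G ℓ - 1) j}
      ≤ (G ℓ : ENNReal)⁻¹ :=
  carry_stmt17_general G hG hG0 τ hτ μ hsupp hinv ℓ
end
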